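/- arXiv:2401.08479 — 4 statements merged into one kernel-verified Lean document; each statement's English description precedes it below -/
import Mathlib

section
/- Let f : S^1 → ℝ be a non-constant continuous circle mapping. Then the upper box dimension of the real tree T(f) equals the variation index of f: ubd T(f) = I(f). -/
open Set Filter Metric Topology
open scoped ENNReal NNReal

noncomputable section

/-- A partition of `[0,1]` with `n+1` points `0 ≤ x₀ < x₁ < ⋯ < xₙ ≤ 1`. -/
def IsPartition (n : ℕ) (x : Fin (n + 1) → ℝ) : Prop :=
  StrictMono x ∧ ∀ i, x i ∈ Set.Icc (0 : ℝ) 1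

/-- The variational sum `∑ |f(xᵢ) - f(xᵢ₊₁)|^p` of `f` along a partition. -/
def varSum (f : ℝ → ℝ) (p : ℝ) (n : ℕ) (x : Fin (n + 1) → ℝ) : ℝ :=
  ∑ i : Fin n, |f (x i.castSucc) - f (x i.succ)| ^ p

/-- The `p`-variation `V^p(f)` of `f` over `[0,1]`. -/
def pVar (f : ℝ → ℝ) (p : ℝ) : ℝ≥0∞ :=
  ⨆ (n : ℕ) (x : Fin (n + 1) → ℝ) (_ : IsPartition n x), ENNReal.ofReal (varSum f p n x)

/-- The variation index `I(f) = sup {p ≥ 1 | V^p(f) = ∞}` (with `sup ∅ = 1`). -/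
def varIndex (f : ℝ → ℝ) : ℝ≥0∞ :=
  1 ⊔ ⨆ (p : ℝ) (_ : 1 ≤ p) (_ : pVar f p = ⊤), ENNReal.ofReal p

/-- The `(p,r)`-variation `V_r^p(f)`: the supremum of variational sums over partitions
all of whose increments satisfy `|f(xᵢ) - f(xᵢ₊₁)| = r`. -/
def prVar (f : ℝ → ℝ) (p r : ℝ) : ℝ≥0∞ :=
  ⨆ (n : ℕ) (x : Fin (n + 1) → ℝ) (_ : IsPartition n x)
    (_ : ∀ i : Fin n, |f (x i.castSucc) - f (x i.succ)| = r),
    ENNReal.ofReal (varSum f p n x)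

/-- The upper variation content `V̄^p(f) = limsup_{r→0⁺} V_r^p(f)`. -/
def uVarContent (f : ℝ → ℝ) (p : ℝ) : ℝ≥0∞ :=
  limsup (fun r => prVar f p r) (𝓝[>] (0 : ℝ))

/-- The lower variation content `V̲^p(f) = liminf_{r→0⁺} V_r^p(f)`. -/
def lVarContent (f : ℝ → ℝ) (p : ℝ) : ℝ≥0∞ :=
  liminf (fun r => prVar f p r) (𝓝[>] (0 : ℝ))

/-- The upper variation index `Ī(f) = sup {p ≥ 1 | V̄^p(f) = ∞}` (with `sup ∅ = 1`). -/
def upperVarIndex (f : ℝ → ℝ) : ℝ≥0∞ :=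
  1 ⊔ ⨆ (p : ℝ) (_ : 1 ≤ p) (_ : uVarContent f p = ⊤), ENNReal.ofReal p

/-- The lower variation index `I̲(f) = sup {p ≥ 1 | V̲^p(f) = ∞}` (with `sup ∅ = 1`). -/
def lowerVarIndex (f : ℝ → ℝ) : ℝ≥0∞ :=
  1 ⊔ ⨆ (p : ℝ) (_ : 1 ≤ p) (_ : lVarContent f p = ⊤), ENNReal.ofReal p

/-- The tree pseudometric `d_f(x,y) = f x + f y - 2 min_{[x∧y, x∨y]} f`. -/
def treeDist (f : ℝ → ℝ) (x y : ℝ) : ℝ :=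
  f x + f y - 2 * sInf (f '' Set.uIcc x y)

/-- The maximal cardinality of an `r`-separated subset of `A` with respect to the
(pseudo)distance `d`. -/
def Nsep {X : Type*} (d : X → X → ℝ) (A : Set X) (r : ℝ) : ℕ :=
  sSup {n | ∃ s : Finset X, (s : Set X) ⊆ A ∧ s.card = n ∧
    ∀ x ∈ s, ∀ y ∈ s, x ≠ y → r < d x y}

/-- Upper box dimension associated with a counting function `N`. -/
def ubdOf (N : ℝ → ℕ) : ℝ≥0∞ :=
  limsup (fun r : ℝ => ENNReal.ofReal (Real.log (N r : ℝ) / (-Real.log r))) (𝓝[>] (0 : ℝ))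

/-- Lower box dimension associated with a counting function `N`. -/
def lbdOf (N : ℝ → ℕ) : ℝ≥0∞ :=
  liminf (fun r : ℝ => ENNReal.ofReal (Real.log (N r : ℝ) / (-Real.log r))) (𝓝[>] (0 : ℝ))

/-- Upper box dimension of the real tree `T(g)` of an excursion `g`, computed through
`r`-separated subsets of `([0,1], d_g)` (these correspond exactly to `r`-separated subsets
of the metric quotient `T(g)`). -/
def ubdTree (g : ℝ → ℝ) : ℝ≥0∞ := ubdOf (fun r => Nsep (treeDist g) (Set.Icc 0 1) r)

/-- Lower box dimension of the real tree `T(g)` of an excursion `g`. -/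
def lbdTree (g : ℝ → ℝ) : ℝ≥0∞ := lbdOf (fun r => Nsep (treeDist g) (Set.Icc 0 1) r)

/-- The modified upper box dimension of the real tree `T(g)`:
the infimum over countable covers of `sup_i ubd`. -/
def umbdTree (g : ℝ → ℝ) : ℝ≥0∞ :=
  ⨅ (U : ℕ → Set ℝ) (_ : Set.Icc (0 : ℝ) 1 ⊆ ⋃ i, U i),
    ⨆ i, ubdOf (fun r => Nsep (treeDist g) (U i ∩ Set.Icc 0 1) r)

/-- The graph `Γ(g) = {(x, g x) | x ∈ [0,1]} ⊆ ℝ²`. -/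
def graphSet (g : ℝ → ℝ) : Set (ℝ × ℝ) := {q | ∃ x ∈ Set.Icc (0 : ℝ) 1, q = (x, g x)}

/-- Upper box dimension of the graph of `g` over `[0,1]`. -/
def ubdGraph (g : ℝ → ℝ) : ℝ≥0∞ :=
  ubdOf (fun r => Nsep (fun u v : ℝ × ℝ => dist u v) (graphSet g) r)

/-- `τ : ℝ → ℝ` is a lift of a homeomorphism of the circle `S¹ = ℝ/ℤ`. -/
def IsCircleHomeoLift (τ : ℝ → ℝ) : Prop :=
  Continuous τ ∧ Function.Bijective τ ∧
    ((∀ x, τ (x + 1) = τ x + 1) ∨ (∀ x, τ (x + 1) = τ x - 1))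

end

/-!
Both sides are governed by `maxBigCount h s`, the largest number of increments exceeding `s`
along a partition of `[0, 1]`. In the tree of `g`, the right ends of the large increasing steps
of a partition are `s`-separated, and so are the left ends of the large decreasing ones;
conversely, between two consecutive points of an `r`-separated set the function makes a step
larger than `r / 2`. Hence `N_r(T(g))` is comparable to `maxBigCount g (r / 2)`, and rotating
the circle only changes `maxBigCount` by a factor `2` and an additive `1`. On the variation side,
`maxBigCount f s ≤ V^q(f) s^(-q)`, while `maxBigCount f s = O(s^(-q))` makes `V^p(f)` finite for
every `p > q` by a dyadic decomposition of the increments. The lower bound `1` comes from the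
levels of the non-constant `g`, which give `≳ 1 / r` points that are `r`-separated.
-/

noncomputable section

lemma card_le_of_forall_lt_abs_sub {s : Finset ℝ} (hs : (s : Set ℝ) ⊆ Icc 0 1) {δ : ℝ}
    (hδ : 0 < δ) (hsep : ∀ x ∈ s, ∀ y ∈ s, x ≠ y → δ < |x - y|) :
    s.card ≤ ⌊1 / δ⌋₊ + 1 := by
  have hmaps : MapsTo (fun x => ⌊x / δ⌋₊) s (Finset.range (⌊1 / δ⌋₊ + 1)) := fun x hx => by
    rw [Finset.mem_coe, Finset.mem_range, Nat.lt_succ_iff]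
    exact Nat.floor_le_floor (div_le_div_of_nonneg_right (hs hx).2 hδ.le)
  have hinj : InjOn (fun x => ⌊x / δ⌋₊) s := by
    intro x hx y hy hxy
    by_contra hne
    have hx₁ := Nat.floor_le (div_nonneg (hs hx).1 hδ.le)
    have hx₂ := Nat.lt_floor_add_one (x / δ)
    have hy₁ := Nat.floor_le (div_nonneg (hs hy).1 hδ.le)
    have hy₂ := Nat.lt_floor_add_one (y / δ)
    simp only at hxy
    rw [hxy] at hx₁ hx₂
    have hlt : |x - y| / δ < 1 := by
      rw [← abs_of_pos hδ, ← abs_div, sub_div, abs_sub_lt_iff]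
      constructor <;> linarith
    rw [div_lt_one hδ] at hlt
    exact (hsep x hx y hy hne).not_gt hlt
  simpa using Finset.card_le_card_of_injOn _ hmaps hinj

lemma exists_pos_forall_abs_sub_le {h : ℝ → ℝ} (hh : Continuous h) {ε : ℝ} (hε : 0 < ε) :
    ∃ δ > 0, ∀ u ∈ Icc (0 : ℝ) 1, ∀ v ∈ Icc (0 : ℝ) 1, |u - v| ≤ δ → |h u - h v| ≤ ε := by
  have := (isCompact_Icc (a := (0 : ℝ)) (b := 1)).uniformContinuousOn_of_continuous hh.continuousOn
  simpa only [Real.dist_eq] using Metric.uniformContinuousOn_iff_le.1 this ε hε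

section TreeDist

variable {g : ℝ → ℝ}

lemma treeDist_comm (g : ℝ → ℝ) (u v : ℝ) : treeDist g u v = treeDist g v u := by
  rw [treeDist, treeDist, uIcc_comm, add_comm (g u)]

lemma exists_treeDist_eq (hg : Continuous g) (u v : ℝ) :
    ∃ z ∈ uIcc u v, treeDist g u v = g u + g v - 2 * g z ∧ ∀ w ∈ uIcc u v, g z ≤ g w := by
  obtain ⟨z, hz, hinf, hmin⟩ :=
    isCompact_uIcc.exists_sInf_image_eq_and_le nonempty_uIcc hg.continuousOn
  exact ⟨z, hz, by rw [treeDist, hinf], hmin⟩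

lemma sub_le_treeDist_right (hg : Continuous g) {u v z : ℝ} (hz : z ∈ uIcc u v) :
    g v - g z ≤ treeDist g u v := by
  obtain ⟨m, -, hd, hm⟩ := exists_treeDist_eq hg u v
  linarith [hm u left_mem_uIcc, hm z hz]

lemma sub_le_treeDist_left (hg : Continuous g) {u v z : ℝ} (hz : z ∈ uIcc u v) :
    g u - g z ≤ treeDist g u v :=
  treeDist_comm g v u ▸ sub_le_treeDist_right hg (uIcc_comm u v ▸ hz)

lemma abs_sub_le_treeDist (hg : Continuous g) (u v : ℝ) : |g u - g v| ≤ treeDist g u v :=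
  abs_sub_le_iff.2 ⟨sub_le_treeDist_left hg right_mem_uIcc, sub_le_treeDist_right hg left_mem_uIcc⟩

lemma treeDist_le_of_forall_abs_sub_le (hg : Continuous g) {u v ε : ℝ}
    (hu : ∀ w ∈ uIcc u v, |g u - g w| ≤ ε) (hv : ∀ w ∈ uIcc u v, |g v - g w| ≤ ε) :
    treeDist g u v ≤ 2 * ε := by
  obtain ⟨z, hz, hd, -⟩ := exists_treeDist_eq hg u v
  linarith [(abs_le.1 (hu z hz)).2, (abs_le.1 (hv z hz)).2]

lemma exists_card_le_of_treeDist_separated (hg : Continuous g) {r : ℝ} (hr : 0 < r) :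
    ∃ B : ℕ, ∀ t : Finset ℝ, (t : Set ℝ) ⊆ Icc 0 1 →
      (∀ x ∈ t, ∀ y ∈ t, x ≠ y → r < treeDist g x y) → t.card ≤ B := by
  obtain ⟨δ, hδ, hmod⟩ := exists_pos_forall_abs_sub_le hg (half_pos hr)
  refine ⟨⌊1 / δ⌋₊ + 1, fun t ht hsep => card_le_of_forall_lt_abs_sub ht hδ ?_⟩
  intro x hx y hy hxy
  by_contra! hclose
  have hsub : uIcc x y ⊆ Icc 0 1 := uIcc_subset_Icc (ht hx) (ht hy)
  have := treeDist_le_of_forall_abs_sub_le hg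
    (fun w hw => hmod x (ht hx) w (hsub hw) <| by
      rw [abs_sub_comm]; exact (abs_sub_left_of_mem_uIcc hw).trans (by rwa [abs_sub_comm]))
    (fun w hw => hmod y (ht hy) w (hsub hw) <|
      (abs_sub_right_of_mem_uIcc hw).trans (by rwa [abs_sub_comm]))
  linarith [hsep x hx y hy hxy]

lemma le_Nsep (hg : Continuous g) {r : ℝ} (hr : 0 < r) {t : Finset ℝ}
    (ht : (t : Set ℝ) ⊆ Icc 0 1) (hsep : ∀ x ∈ t, ∀ y ∈ t, x ≠ y → r < treeDist g x y) :
    t.card ≤ Nsep (treeDist g) (Icc 0 1) r := by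
  obtain ⟨B, hB⟩ := exists_card_le_of_treeDist_separated hg hr
  exact le_csSup ⟨B, by rintro _ ⟨t, ht, rfl, hsep⟩; exact hB t ht hsep⟩ ⟨t, ht, rfl, hsep⟩

lemma exists_card_eq_Nsep (hg : Continuous g) {r : ℝ} (hr : 0 < r) :
    ∃ t : Finset ℝ, (t : Set ℝ) ⊆ Icc 0 1 ∧ t.card = Nsep (treeDist g) (Icc 0 1) r ∧
      ∀ x ∈ t, ∀ y ∈ t, x ≠ y → r < treeDist g x y := by
  obtain ⟨B, hB⟩ := exists_card_le_of_treeDist_separated hg hr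
  exact Nat.sSup_mem (s := {n | ∃ t : Finset ℝ, (t : Set ℝ) ⊆ Icc 0 1 ∧ t.card = n ∧
    ∀ x ∈ t, ∀ y ∈ t, x ≠ y → r < treeDist g x y}) ⟨0, ∅, by simp⟩
    ⟨B, by rintro _ ⟨t, ht, rfl, hsep⟩; exact hB t ht hsep⟩

lemma Nsep_anti (hg : Continuous g) {r r' : ℝ} (hr : 0 < r) (hrr' : r ≤ r') :
    Nsep (treeDist g) (Icc 0 1) r' ≤ Nsep (treeDist g) (Icc 0 1) r := by
  obtain ⟨t, ht, hcard, hsep⟩ := exists_card_eq_Nsep hg (hr.trans_le hrr')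
  exact hcard ▸ le_Nsep hg hr ht fun x hx y hy hxy => hrr'.trans_lt (hsep x hx y hy hxy)

end TreeDist

section BigCount

def bigCount (h : ℝ → ℝ) (s : ℝ) (n : ℕ) (x : Fin (n + 1) → ℝ) : ℕ :=
  (Finset.univ.filter fun i : Fin n => s < |h (x i.castSucc) - h (x i.succ)|).card

/-- Finite when `h` is continuous and `s > 0` (`exists_bigCount_le`); otherwise `sSup`
returns the junk value `0`. -/
def maxBigCount (h : ℝ → ℝ) (s : ℝ) : ℕ :=
  sSup {K | ∃ n x, IsPartition n x ∧ K = bigCount h s n x}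

variable {h : ℝ → ℝ} {s : ℝ} {n : ℕ} {x : Fin (n + 1) → ℝ}

lemma IsPartition.succ_le_castSucc (hx : IsPartition n x) {i j : Fin n} (hij : i < j) :
    x i.succ ≤ x j.castSucc :=
  hx.1.monotone (Fin.succ_le_castSucc_iff.2 hij)

lemma IsPartition.castSucc_lt_succ (hx : IsPartition n x) (i : Fin n) :
    x i.castSucc < x i.succ :=
  hx.1 i.castSucc_lt_succ

lemma exists_bigCount_le (hh : Continuous h) (hs : 0 < s) :
    ∃ B, ∀ n x, IsPartition n x → bigCount h s n x ≤ B := by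
  obtain ⟨δ, hδ, hmod⟩ := exists_pos_forall_abs_sub_le hh hs
  refine ⟨⌊1 / δ⌋₊ + 1, fun n x hx => ?_⟩
  set S := Finset.univ.filter fun i : Fin n => s < |h (x i.castSucc) - h (x i.succ)|
  have hlong : ∀ i ∈ S, δ < x i.succ - x i.castSucc := by
    intro i hi
    by_contra! hle
    refine (Finset.mem_filter.1 hi).2.not_ge (hmod _ (hx.2 _) _ (hx.2 _) ?_)
    rwa [abs_sub_comm, abs_of_pos (sub_pos.2 (hx.castSucc_lt_succ i))]
  have hsep : ∀ i ∈ S, ∀ j ∈ S, i < j → δ < x j.castSucc - x i.castSucc := fun i hi j _ hij =>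
    (hlong i hi).trans_le (by linarith [hx.succ_le_castSucc hij])
  calc bigCount h s n x = (S.image fun i => x i.castSucc).card :=
        (Finset.card_image_of_injective _ (hx.1.injective.comp (Fin.castSucc_injective n))).symm
    _ ≤ ⌊1 / δ⌋₊ + 1 := by
      refine card_le_of_forall_lt_abs_sub (fun _ hy => ?_) hδ ?_
      · obtain ⟨i, -, rfl⟩ := Finset.mem_image.1 hy
        exact hx.2 _
      simp only [Finset.mem_image]
      rintro _ ⟨i, hi, rfl⟩ _ ⟨j, hj, rfl⟩ hne
      rcases lt_or_gt_of_ne (ne_of_apply_ne _ hne) with hij | hij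
      · rw [abs_sub_comm]
        exact (hsep i hi j hj hij).trans_le (le_abs_self _)
      · exact (hsep j hj i hi hij).trans_le (le_abs_self _)

lemma le_maxBigCount (hh : Continuous h) (hs : 0 < s) (hx : IsPartition n x) :
    bigCount h s n x ≤ maxBigCount h s := by
  obtain ⟨B, hB⟩ := exists_bigCount_le hh hs
  exact le_csSup ⟨B, by rintro _ ⟨n, x, hx, rfl⟩; exact hB n x hx⟩ ⟨n, x, hx, rfl⟩

lemma maxBigCount_le {B : ℕ} (hB : ∀ n x, IsPartition n x → bigCount h s n x ≤ B) :
    maxBigCount h s ≤ B :=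
  csSup_le ⟨_, 0, fun _ => 0,
      ⟨Fin.strictMono_iff_lt_succ.2 Fin.elim0, fun _ => ⟨le_rfl, zero_le_one⟩⟩, rfl⟩
    (by rintro _ ⟨n, x, hx, rfl⟩; exact hB n x hx)

end BigCount

section TreeBigCount

variable {g : ℝ → ℝ} {r s : ℝ}

lemma card_le_Nsep_of_strictMono (hg : Continuous g) (hr : 0 < r) {n : ℕ} {S : Finset (Fin n)}
    {e : Fin n → ℝ} (he : StrictMono e) (hmem : ∀ i, e i ∈ Icc 0 1)
    (hsep : ∀ i ∈ S, ∀ j ∈ S, i < j → r < treeDist g (e i) (e j)) :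
    S.card ≤ Nsep (treeDist g) (Icc 0 1) r := by
  rw [← Finset.card_image_of_injective S he.injective]
  refine le_Nsep hg hr (fun _ hy => ?_) ?_
  · obtain ⟨i, -, rfl⟩ := Finset.mem_image.1 hy
    exact hmem i
  simp only [Finset.mem_image]
  rintro _ ⟨i, hi, rfl⟩ _ ⟨j, hj, rfl⟩ hne
  rcases lt_or_gt_of_ne (ne_of_apply_ne e hne) with hij | hij
  · exact hsep i hi j hj hij
  · exact treeDist_comm g _ _ ▸ hsep j hj i hi hij

/-- The right endpoints of the increasing steps larger than `s`, and the left endpoints of the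
decreasing ones, are `s`-separated in the tree. -/
lemma bigCount_le_two_mul_Nsep (hg : Continuous g) (hs : 0 < s) {n : ℕ}
    {x : Fin (n + 1) → ℝ} (hx : IsPartition n x) :
    bigCount g s n x ≤ 2 * Nsep (treeDist g) (Icc 0 1) s := by
  set U := Finset.univ.filter fun i : Fin n => s < g (x i.succ) - g (x i.castSucc)
  set D := Finset.univ.filter fun i : Fin n => s < g (x i.castSucc) - g (x i.succ)
  have hU : U.card ≤ Nsep (treeDist g) (Icc 0 1) s :=
    card_le_Nsep_of_strictMono hg hs (hx.1.comp Fin.strictMono_succ) (fun _ => hx.2 _)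
      fun i _ j hj hij => (Finset.mem_filter.1 hj).2.trans_le <| sub_le_treeDist_right hg <|
        mem_uIcc_of_le (hx.succ_le_castSucc hij) (hx.castSucc_lt_succ j).le
  have hD : D.card ≤ Nsep (treeDist g) (Icc 0 1) s :=
    card_le_Nsep_of_strictMono hg hs (hx.1.comp Fin.strictMono_castSucc) (fun _ => hx.2 _)
      fun i hi j _ hij => (Finset.mem_filter.1 hi).2.trans_le <| sub_le_treeDist_left hg <|
        mem_uIcc_of_le (hx.castSucc_lt_succ i).le (hx.succ_le_castSucc hij)
  calc bigCount g s n x ≤ (U ∪ D).card := by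
        refine Finset.card_le_card fun i hi => ?_
        simp only [Finset.mem_union, U, D, Finset.mem_filter, Finset.mem_univ, true_and]
        rcases lt_abs.1 (Finset.mem_filter.1 hi).2 with hlt | hlt
        · exact Or.inr hlt
        · exact Or.inl (by linarith)
    _ ≤ U.card + D.card := Finset.card_union_le U D
    _ ≤ 2 * Nsep (treeDist g) (Icc 0 1) s := by omega

lemma exists_mem_Ioo_half_lt_abs_sub {h : ℝ → ℝ} {u v : ℝ} (huv : u < v)
    (hr : r < |h u - h v|) :
    ∃ w ∈ Ioo u v, r / 2 < |h u - h w| ∨ r / 2 < |h w - h v| := by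
  refine ⟨(u + v) / 2, ⟨by linarith, by linarith⟩, ?_⟩
  by_contra! hle
  linarith [abs_sub_le (h u) (h ((u + v) / 2)) (h v)]

lemma exists_mem_Ioo_half_lt_abs_sub_of_lt_treeDist (hg : Continuous g) {u v : ℝ} (huv : u < v)
    (hr : r < treeDist g u v) :
    ∃ w ∈ Ioo u v, r / 2 < |g u - g w| ∨ r / 2 < |g w - g v| := by
  obtain ⟨z, hz, hd, hmin⟩ := exists_treeDist_eq hg u v
  rw [uIcc_of_le huv.le] at hz
  rcases eq_or_lt_of_le hz.1 with rfl | hzu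
  · exact exists_mem_Ioo_half_lt_abs_sub huv (lt_abs.2 (Or.inr (by linarith)))
  rcases eq_or_lt_of_le hz.2 with rfl | hzv
  · exact exists_mem_Ioo_half_lt_abs_sub huv (lt_abs.2 (Or.inl (by linarith)))
  refine ⟨z, ⟨hzu, hzv⟩, ?_⟩
  by_contra! hle
  linarith [le_abs_self (g u - g z), neg_le_abs (g z - g v)]

lemma le_maxBigCount_of_gaps {h : ℝ → ℝ} (hh : Continuous h) (hs : 0 < s) {M : ℕ}
    {y w : ℕ → ℝ} (hy : ∀ m ≤ M, y m ∈ Icc 0 1)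
    (hw : ∀ m < M, w m ∈ Ioo (y m) (y (m + 1)) ∧
      (s < |h (y m) - h (w m)| ∨ s < |h (w m) - h (y (m + 1))|)) :
    M ≤ maxBigCount h s := by
  set x : Fin (2 * M + 1) → ℝ := fun k => if k.val % 2 = 0 then y (k / 2) else w (k / 2)
  have hx : IsPartition (2 * M) x := by
    refine ⟨Fin.strictMono_iff_lt_succ.2 fun k => ?_, fun k => ?_⟩
    · simp only [x, Fin.val_castSucc, Fin.val_succ]
      rcases Nat.mod_two_eq_zero_or_one k with hk | hk
      · rw [if_pos hk, if_neg (by omega), show (k.val + 1) / 2 = k / 2 by omega]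
        exact (hw _ (by omega)).1.1
      · rw [if_neg (by omega), if_pos (by omega), show (k.val + 1) / 2 = k / 2 + 1 by omega]
        exact (hw _ (by omega)).1.2
    · simp only [x]
      split_ifs with hk
      · exact hy _ (by omega)
      · have hlo := hy (k / 2) (by omega)
        have hhi := hy (k / 2 + 1) (by omega)
        have hmid := (hw (k / 2) (by omega)).1
        exact ⟨hlo.1.trans hmid.1.le, hmid.2.le.trans hhi.2⟩
  set e : Fin M → Fin (2 * M) := fun m =>
    if s < |h (y m) - h (w m)| then ⟨2 * m, by omega⟩ else ⟨2 * m + 1, by omega⟩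
  have hcount : M ≤ bigCount h s (2 * M) x := by
    calc M = (Finset.univ : Finset (Fin M)).card := (Finset.card_fin M).symm
      _ ≤ bigCount h s (2 * M) x := by
        refine Finset.card_le_card_of_injOn e (fun m _ => ?_) (fun m _ m' _ hmm' => ?_)
        · simp only [Finset.coe_filter, Finset.mem_univ, true_and, mem_ofPred_eq, e]
          split_ifs with hm
          · simpa [x, Fin.val_succ, show (2 * m.val + 1) / 2 = m by omega] using hm
          · simpa [x, Fin.val_succ, show (2 * m.val + 1) / 2 = m by omega,
              show (2 * m.val + 1 + 1) % 2 = 0 by omega,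
              show (2 * m.val + 1 + 1) / 2 = m + 1 by omega] using (hw m m.2).2.resolve_left hm
        · simp only [e] at hmm'
          ext
          split_ifs at hmm' <;> simp only [Fin.mk.injEq] at hmm' <;> omega
  exact hcount.trans (le_maxBigCount hh hs hx)

/-- Between consecutive points of a maximal `r`-separated set there is a step larger
than `r / 2`. -/
lemma Nsep_le_maxBigCount_add_one (hg : Continuous g) (hr : 0 < r) :
    Nsep (treeDist g) (Icc 0 1) r ≤ maxBigCount g (r / 2) + 1 := by
  obtain ⟨t, ht, hcard, hsep⟩ := exists_card_eq_Nsep hg hr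
  rw [← hcard]
  obtain hzero | ⟨M, hM⟩ : t.card = 0 ∨ ∃ M, t.card = M + 1 := by
    cases t.card <;> simp
  · simp [hzero]
  set e := t.orderEmbOfFin hM
  set y : ℕ → ℝ := fun m => e ⟨min m M, by omega⟩
  have hgap : ∀ m < M, ∃ w ∈ Ioo (y m) (y (m + 1)),
      r / 2 < |g (y m) - g w| ∨ r / 2 < |g w - g (y (m + 1))| := fun m hm => by
    have hlt : y m < y (m + 1) := e.strictMono (by simp [Fin.lt_def]; omega)
    exact exists_mem_Ioo_half_lt_abs_sub_of_lt_treeDist hg hlt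
      (hsep _ (t.orderEmbOfFin_mem hM _) _ (t.orderEmbOfFin_mem hM _) hlt.ne)
  choose! w hw using hgap
  have := le_maxBigCount_of_gaps hg (half_pos hr)
    (fun m _ => ht (t.orderEmbOfFin_mem hM _)) fun m hm => ⟨(hw m hm).1, (hw m hm).2⟩
  omega

end TreeBigCount

section Rotation

variable {h : ℝ → ℝ} {s : ℝ}

lemma bigCount_add (h : ℝ → ℝ) (s : ℝ) {m k : ℕ} (x : Fin (m + k + 1) → ℝ) :
    bigCount h s (m + k) x = bigCount h s m (fun j => x (Fin.castLE (by omega) j)) +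
      bigCount h s k (fun j => x (Fin.natAdd m j)) := by
  simp only [bigCount, Finset.card_filter]
  exact Fin.sum_univ_add _

lemma bigCount_succ_le (h : ℝ → ℝ) (s : ℝ) {k : ℕ} (x : Fin (k + 2) → ℝ) :
    bigCount h s (k + 1) x ≤ bigCount h s k (fun j => x j.succ) + 1 := by
  simp only [bigCount, Finset.card_filter]
  rw [Fin.sum_univ_succ, add_comm]
  exact Nat.add_le_add_left (by split_ifs <;> simp) _

lemma bigCount_le_maxBigCount_of_eq {h' φ : ℝ → ℝ} {C : ℝ} (hh' : Continuous h') (hs : 0 < s)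
    (hφ : StrictMono φ) {n : ℕ} {x : Fin (n + 1) → ℝ} (hx : StrictMono x)
    (hmem : ∀ i, φ (x i) ∈ Icc 0 1) (heq : ∀ i, h (x i) = h' (φ (x i)) + C) :
    bigCount h s n x ≤ maxBigCount h' s := by
  convert le_maxBigCount hh' hs ⟨hφ.comp hx, hmem⟩ using 1
  simp only [bigCount, Function.comp, heq, add_sub_add_right_eq_sub]

variable {h' φ₁ φ₂ : ℝ → ℝ} {c C : ℝ}

lemma bigCount_le_of_split_at (hh' : Continuous h') (hs : 0 < s) (hφ₁ : StrictMono φ₁)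
    (hφ₂ : StrictMono φ₂)
    (h₁ : ∀ t ∈ Icc 0 1, t < c → φ₁ t ∈ Icc 0 1 ∧ h t = h' (φ₁ t) + C)
    (h₂ : ∀ t ∈ Icc 0 1, c ≤ t → φ₂ t ∈ Icc 0 1 ∧ h t = h' (φ₂ t) + C)
    {m k : ℕ} {x : Fin (m + k + 1) → ℝ} (hx : IsPartition (m + k) x)
    (hlt : ∀ i : Fin (m + k + 1), i.val ≤ m → x i < c)
    (hge : ∀ i : Fin (m + k + 1), m < i.val → c ≤ x i) :
    bigCount h s (m + k) x ≤ 2 * maxBigCount h' s + 1 := by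
  have hlow : bigCount h s m (fun j => x (Fin.castLE (by omega) j)) ≤ maxBigCount h' s := by
    have hj : ∀ j : Fin (m + 1), x (Fin.castLE (by omega) j) < c := fun j => hlt _ (by simp; omega)
    exact bigCount_le_maxBigCount_of_eq hh' hs hφ₁ (hx.1.comp (Fin.strictMono_castLE _))
      (fun j => (h₁ _ (hx.2 _) (hj j)).1) fun j => (h₁ _ (hx.2 _) (hj j)).2
  have hhigh : bigCount h s k (fun j => x (Fin.natAdd m j)) ≤ maxBigCount h' s + 1 := by
    rcases k with _ | k
    · simp [bigCount]
    refine (bigCount_succ_le h s _).trans (Nat.add_le_add_right ?_ 1)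
    have hj : ∀ j : Fin (k + 1), c ≤ x (Fin.natAdd m j.succ) := fun j => hge _ (by simp)
    exact bigCount_le_maxBigCount_of_eq hh' hs hφ₂
      (hx.1.comp ((Fin.strictMono_natAdd m).comp Fin.strictMono_succ))
      (fun j => (h₂ _ (hx.2 _) (hj j)).1) fun j => (h₂ _ (hx.2 _) (hj j)).2
  rw [bigCount_add]
  omega

/-- Besides the steps left of `c` and those right of `c`, at most one step crosses `c`. -/
lemma bigCount_le_of_split (hh' : Continuous h') (hs : 0 < s) (hφ₁ : StrictMono φ₁)
    (hφ₂ : StrictMono φ₂)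
    (h₁ : ∀ t ∈ Icc 0 1, t < c → φ₁ t ∈ Icc 0 1 ∧ h t = h' (φ₁ t) + C)
    (h₂ : ∀ t ∈ Icc 0 1, c ≤ t → φ₂ t ∈ Icc 0 1 ∧ h t = h' (φ₂ t) + C)
    {n : ℕ} {x : Fin (n + 1) → ℝ} (hx : IsPartition n x) :
    bigCount h s n x ≤ 2 * maxBigCount h' s + 1 := by
  by_cases h0 : c ≤ x 0
  · have hj : ∀ i, c ≤ x i := fun i => h0.trans (hx.1.monotone (Fin.zero_le i))
    have := bigCount_le_maxBigCount_of_eq hh' hs hφ₂ hx.1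
      (fun i => (h₂ _ (hx.2 _) (hj i)).1) fun i => (h₂ _ (hx.2 _) (hj i)).2
    omega
  set P : ℕ → Prop := fun i => ∃ hi : i < n + 1, x ⟨i, hi⟩ < c
  obtain ⟨_, hxm⟩ : ∃ hi : Nat.findGreatest P n < n + 1, x ⟨_, hi⟩ < c :=
    Nat.findGreatest_spec (P := P) (Nat.zero_le n) ⟨n.succ_pos, not_le.1 h0⟩
  have hlt : ∀ i : Fin (n + 1), i.val ≤ Nat.findGreatest P n → x i < c := fun i hi =>
    (hx.1.monotone (Fin.le_def.2 hi)).trans_lt hxm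
  have hge : ∀ i : Fin (n + 1), Nat.findGreatest P n < i.val → c ≤ x i := fun i hi =>
    not_lt.1 fun hi' => Nat.findGreatest_is_greatest hi (by omega) ⟨i.2, hi'⟩
  obtain ⟨k, hk⟩ := Nat.exists_eq_add_of_le (Nat.findGreatest_le (P := P) n)
  generalize Nat.findGreatest P n = m at hk hlt hge
  subst hk
  exact bigCount_le_of_split_at hh' hs hφ₁ hφ₂ h₁ h₂ hx hlt hge

variable {f : ℝ → ℝ} {a : ℝ}

lemma maxBigCount_le_rotate (hf : Continuous f) (hper : ∀ x, f (x + 1) = f x)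
    (ha : a ∈ Icc (0 : ℝ) 1) (hs : 0 < s) :
    maxBigCount f s ≤ 2 * maxBigCount (fun t => f (t + a) - f a) s + 1 := by
  refine maxBigCount_le fun n x hx => bigCount_le_of_split (c := a) (C := f a)
    (φ₁ := fun t => t + (1 - a)) (φ₂ := fun t => t - a) (by fun_prop) hs
    (strictMono_id.add_const _) (fun _ _ h => sub_lt_sub_right h a) ?_ ?_ hx
  · intro t ht hta
    refine ⟨⟨by linarith [ht.1, ha.2], by linarith⟩, ?_⟩
    rw [show t + (1 - a) + a = t + 1 by ring, hper]
    ring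
  · intro t ht hta
    refine ⟨⟨by linarith, by linarith [ht.2, ha.1]⟩, ?_⟩
    simp only [sub_add_cancel]

lemma maxBigCount_rotate_le (hf : Continuous f) (hper : ∀ x, f (x + 1) = f x)
    (ha : a ∈ Icc (0 : ℝ) 1) (hs : 0 < s) :
    maxBigCount (fun t => f (t + a) - f a) s ≤ 2 * maxBigCount f s + 1 := by
  refine maxBigCount_le fun n x hx => bigCount_le_of_split (c := 1 - a) (C := -f a)
    (φ₁ := fun t => t + a) (φ₂ := fun t => t + (a - 1)) hf hs
    (strictMono_id.add_const _) (strictMono_id.add_const _) ?_ ?_ hx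
  · intro t ht hta
    exact ⟨⟨by linarith [ht.1, ha.1], by linarith⟩, by ring⟩
  · intro t ht hta
    refine ⟨⟨by linarith, by linarith [ht.2, ha.2]⟩, ?_⟩
    rw [← hper (t + (a - 1))]
    ring_nf

end Rotation

section Variation

/-- Weak `ℓ^q` embeds in `ℓ^p` for `p > q`: sort the `Δ i` into the dyadic shells
`(G / 2 ^ (b + 1), G / 2 ^ b]`. -/
lemma sum_rpow_le_of_card_lt_le {ι : Type*} (t : Finset ι) (Δ : ι → ℝ) {A G p q : ℝ}
    (hG : 0 < G) (hq : 0 ≤ q) (hqp : q < p) (hΔ : ∀ i ∈ t, 0 ≤ Δ i ∧ Δ i ≤ G)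
    (hcard : ∀ s, 0 < s → s ≤ G → ((t.filter fun i => s < Δ i).card : ℝ) ≤ A * s ^ (-q)) :
    ∑ i ∈ t, Δ i ^ p ≤ A * G ^ (p - q) * 2 ^ q / (1 - 2 ^ (q - p)) := by
  have hp : 0 < p := hq.trans_lt hqp
  have hA : 0 ≤ A := nonneg_of_mul_nonneg_left ((Nat.cast_nonneg _).trans (hcard G hG le_rfl))
    (Real.rpow_pos_of_pos hG _)
  have hshell : ∀ i ∈ t, 0 < Δ i → ∃ k : ℕ, G / 2 ^ (k + 1) < Δ i ∧ Δ i ≤ G / 2 ^ k := by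
    intro i hi hpos
    obtain ⟨k, hk, hk'⟩ := exists_nat_pow_near ((one_le_div hpos).2 (hΔ i hi).2) one_lt_two
    refine ⟨k, ?_, ?_⟩
    · rwa [div_lt_iff₀ (by positivity), mul_comm, ← div_lt_iff₀ hpos]
    · rwa [le_div_iff₀ (by positivity), mul_comm, ← le_div_iff₀ hpos]
  choose! k hk using hshell
  set M := t.sup k + 1
  have hterm : ∀ i ∈ t, Δ i ^ p ≤
      ∑ b ∈ Finset.range M, if G / 2 ^ (b + 1) < Δ i then (G / 2 ^ b) ^ p else 0 := by
    intro i hi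
    have hnonneg : ∀ b ∈ Finset.range M,
        0 ≤ if G / 2 ^ (b + 1) < Δ i then (G / 2 ^ b) ^ p else 0 := fun b _ => by
      split_ifs <;> positivity
    rcases (hΔ i hi).1.eq_or_lt with h0 | hpos
    · rw [show Δ i ^ p = 0 by rw [← h0, Real.zero_rpow hp.ne']]
      exact Finset.sum_nonneg hnonneg
    refine le_trans ?_ (Finset.single_le_sum hnonneg
      (Finset.mem_range.2 (Nat.lt_succ_of_le (Finset.le_sup (f := k) hi))))
    rw [if_pos (hk i hi hpos).1]
    exact Real.rpow_le_rpow (hΔ i hi).1 (hk i hi hpos).2 hp.le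
  have hscale : ∀ b : ℕ, A * (G / 2 ^ (b + 1)) ^ (-q) * (G / 2 ^ b) ^ p =
      A * G ^ (p - q) * 2 ^ q * ((2 : ℝ) ^ (q - p)) ^ b := fun b => by
    rw [Real.div_rpow hG.le (by positivity), Real.div_rpow hG.le (by positivity),
      ← Real.rpow_pow_comm zero_le_two, ← Real.rpow_pow_comm zero_le_two, Real.rpow_neg hG.le,
      Real.rpow_neg zero_le_two, Real.rpow_sub hG, Real.rpow_sub zero_lt_two]
    have : (0 : ℝ) < 2 ^ p := by positivity
    have : (0 : ℝ) < 2 ^ q := by positivity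
    have : (0 : ℝ) < G ^ q := by positivity
    simp only [inv_pow, div_pow]
    field_simp
    ring
  have hρ : (2 : ℝ) ^ (q - p) < 1 := Real.rpow_lt_one_of_one_lt_of_neg one_lt_two (by linarith)
  calc ∑ i ∈ t, Δ i ^ p
      ≤ ∑ i ∈ t, ∑ b ∈ Finset.range M, if G / 2 ^ (b + 1) < Δ i then (G / 2 ^ b) ^ p else 0 :=
        Finset.sum_le_sum hterm
    _ = ∑ b ∈ Finset.range M,
          ((t.filter fun i => G / 2 ^ (b + 1) < Δ i).card : ℝ) * (G / 2 ^ b) ^ p := by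
        rw [Finset.sum_comm]
        refine Finset.sum_congr rfl fun b _ => ?_
        rw [← Finset.sum_filter, Finset.sum_const, nsmul_eq_mul]
    _ ≤ ∑ b ∈ Finset.range M, A * (G / 2 ^ (b + 1)) ^ (-q) * (G / 2 ^ b) ^ p := by
        refine Finset.sum_le_sum fun b _ => mul_le_mul_of_nonneg_right
          (hcard _ (by positivity) (div_le_self hG.le (one_le_pow₀ one_le_two))) (by positivity)
    _ = A * G ^ (p - q) * 2 ^ q * ∑ b ∈ Finset.range M, ((2 : ℝ) ^ (q - p)) ^ b := by
        rw [Finset.mul_sum]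
        exact Finset.sum_congr rfl fun b _ => hscale b
    _ ≤ A * G ^ (p - q) * 2 ^ q * (1 / (1 - 2 ^ (q - p))) := by
        refine mul_le_mul_of_nonneg_left ?_ (by positivity)
        have := geom_sum_Ico_le_of_lt_one (m := 0) (n := M) (by positivity) hρ
        rwa [pow_zero, ← Finset.range_eq_Ico] at this
    _ = A * G ^ (p - q) * 2 ^ q / (1 - 2 ^ (q - p)) := by ring

variable {f : ℝ → ℝ} {n : ℕ} {x : Fin (n + 1) → ℝ} {p q s : ℝ}

lemma ofReal_varSum_le_pVar (hx : IsPartition n x) :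
    ENNReal.ofReal (varSum f p n x) ≤ pVar f p :=
  le_iSup₂_of_le n x (le_iSup_of_le hx le_rfl)

lemma bigCount_mul_rpow_le_varSum (hq : 0 ≤ q) (hs : 0 < s) :
    (bigCount f s n x : ℝ) * s ^ q ≤ varSum f q n x := by
  rw [← nsmul_eq_mul, varSum]
  refine (Finset.card_nsmul_le_sum _ _ _ fun i hi => ?_).trans
    (Finset.sum_le_univ_sum_of_nonneg fun i => by positivity)
  exact Real.rpow_le_rpow hs.le (Finset.mem_filter.1 hi).2.le hq

lemma maxBigCount_le_of_pVar_ne_top (hq : 0 ≤ q) (hs : 0 < s) (hfin : pVar f q ≠ ⊤) :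
    (maxBigCount f s : ℝ) ≤ (pVar f q).toReal * s ^ (-q) := by
  have hbound : ∀ n x, IsPartition n x →
      (bigCount f s n x : ℝ) ≤ (pVar f q).toReal * s ^ (-q) := by
    intro n x hx
    rw [Real.rpow_neg hs.le, ← div_eq_mul_inv, le_div_iff₀ (by positivity)]
    exact (bigCount_mul_rpow_le_varSum hq hs).trans
      ((ENNReal.ofReal_le_iff_le_toReal hfin).1 (ofReal_varSum_le_pVar hx))
  have h0 : 0 ≤ (pVar f q).toReal * s ^ (-q) := by positivity
  exact (Nat.cast_le.2 (maxBigCount_le fun n x hx => Nat.le_floor (hbound n x hx))).trans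
    (Nat.floor_le h0)

lemma pVar_ne_top_of_bigCount_le (hf : Continuous f) (hq : 0 ≤ q) (hqp : q < p) {A B : ℝ}
    (hcount : ∀ s > 0, ∀ n x, IsPartition n x → (bigCount f s n x : ℝ) ≤ A * s ^ (-q) + B) :
    pVar f p ≠ ⊤ := by
  obtain ⟨C, hC⟩ := isCompact_Icc.exists_bound_of_continuousOn hf.continuousOn
  set G := 2 * C + 1
  have hG : 0 < G := by linarith [(norm_nonneg _).trans (hC 0 ⟨le_rfl, zero_le_one⟩)]
  have hosc : ∀ u ∈ Icc (0 : ℝ) 1, ∀ v ∈ Icc (0 : ℝ) 1, |f u - f v| ≤ G := fun u hu v hv => by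
    linarith [abs_sub (f u) (f v), hC u hu, hC v hv, Real.norm_eq_abs (f u), Real.norm_eq_abs (f v)]
  refine ne_top_of_le_ne_top (b := ENNReal.ofReal
    ((A + |B| * G ^ q) * G ^ (p - q) * 2 ^ q / (1 - 2 ^ (q - p)))) ENNReal.ofReal_ne_top
    (iSup_le fun n => iSup_le fun x => iSup_le fun hx => ENNReal.ofReal_le_ofReal ?_)
  refine sum_rpow_le_of_card_lt_le (A := A + |B| * G ^ q) _ _ hG hq hqp
    (fun i _ => ⟨abs_nonneg _, hosc _ (hx.2 _) _ (hx.2 _)⟩) fun s hs hsG => ?_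
  have hone : 1 ≤ G ^ q * s ^ (-q) := by
    rw [Real.rpow_neg hs.le, ← div_eq_mul_inv, one_le_div (by positivity)]
    exact Real.rpow_le_rpow hs.le hsG hq
  calc _ ≤ A * s ^ (-q) + B := hcount s hs n x hx
    _ ≤ A * s ^ (-q) + |B| * (G ^ q * s ^ (-q)) := by
        nlinarith [le_abs_self B, abs_nonneg B]
    _ = (A + |B| * G ^ q) * s ^ (-q) := by ring

end Variation

section BoxDimension

lemma tendsto_log_mul_rpow_div_neg_log {C : ℝ} (hC : 0 < C) (q : ℝ) :
    Tendsto (fun r => Real.log (C * r ^ (-q)) / -Real.log r) (𝓝[>] 0) (𝓝 q) := by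
  have hlog : Tendsto (fun r => -Real.log r) (𝓝[>] (0 : ℝ)) atTop :=
    tendsto_neg_atBot_atTop.comp Real.tendsto_log_nhdsGT_zero
  have := ((tendsto_const_nhds (x := Real.log C)).div_atTop hlog).add_const q
  rw [zero_add] at this
  refine this.congr' ?_
  filter_upwards [Ioo_mem_nhdsGT one_pos] with r ⟨hr0, hr1⟩
  have : Real.log r ≠ 0 := (Real.log_neg hr0 hr1).ne
  rw [Real.log_mul hC.ne' (Real.rpow_pos_of_pos hr0 _).ne', Real.log_rpow hr0]
  field_simp
  ring

variable {N : ℝ → ℕ} {q : ℝ}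

lemma ubdOf_le_of_eventually_le {C : ℝ} (hC : 0 < C)
    (h : ∀ᶠ r in 𝓝[>] 0, (N r : ℝ) ≤ C * r ^ (-q)) : ubdOf N ≤ ENNReal.ofReal q := by
  rw [← (ENNReal.tendsto_ofReal (tendsto_log_mul_rpow_div_neg_log hC q)).limsup_eq]
  refine limsup_le_limsup ?_
  filter_upwards [h, Ioo_mem_nhdsGT one_pos] with r hN ⟨hr0, hr1⟩
  rcases (N r).eq_zero_or_pos with h0 | hpos
  · simp [h0]
  exact ENNReal.ofReal_le_ofReal (div_le_div_of_nonneg_right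
    (Real.log_le_log (Nat.cast_pos.2 hpos) hN) (neg_pos.2 (Real.log_neg hr0 hr1)).le)

lemma le_ubdOf_of_eventually_le {c : ℝ} (hc : 0 < c)
    (h : ∀ᶠ r in 𝓝[>] 0, c * r ^ (-q) ≤ N r) : ENNReal.ofReal q ≤ ubdOf N := by
  rw [← (ENNReal.tendsto_ofReal (tendsto_log_mul_rpow_div_neg_log hc q)).limsup_eq]
  refine limsup_le_limsup ?_
  filter_upwards [h, Ioo_mem_nhdsGT one_pos] with r hN ⟨hr0, hr1⟩
  have : 0 < c * r ^ (-q) := by positivity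
  exact ENNReal.ofReal_le_ofReal (div_le_div_of_nonneg_right (Real.log_le_log this hN)
    (neg_pos.2 (Real.log_neg hr0 hr1)).le)

lemma eventually_le_rpow_of_ubdOf_lt (h : ubdOf N < ENNReal.ofReal q) :
    ∀ᶠ r in 𝓝[>] 0, (N r : ℝ) ≤ r ^ (-q) := by
  have hq : 0 < q := ENNReal.ofReal_pos.1 (bot_le.trans_lt h)
  filter_upwards [eventually_lt_of_limsup_lt h, Ioo_mem_nhdsGT one_pos] with r hlt ⟨hr0, hr1⟩
  rcases (N r).eq_zero_or_pos with h0 | hpos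
  · rw [h0, Nat.cast_zero]
    positivity
  rw [ENNReal.ofReal_lt_ofReal_iff hq, div_lt_iff₀ (neg_pos.2 (Real.log_neg hr0 hr1))] at hlt
  have : Real.log (N r) < Real.log (r ^ (-q)) := by
    rw [Real.log_rpow hr0]
    linarith
  exact ((Real.log_lt_log_iff (Nat.cast_pos.2 hpos) (by positivity)).1 this).le

end BoxDimension

section LowerBound

variable {g : ℝ → ℝ}

/-- The levels `min (g u) (g v) + 2 r j` are attained between `u` and `v`, and points at
distinct levels are `r`-separated in the tree. -/
lemma floor_add_one_le_Nsep (hg : Continuous g) {u v r : ℝ} (hu : u ∈ Icc (0 : ℝ) 1)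
    (hv : v ∈ Icc (0 : ℝ) 1) (hr : 0 < r) :
    ⌊|g u - g v| / (2 * r)⌋₊ + 1 ≤ Nsep (treeDist g) (Icc 0 1) r := by
  set K := ⌊|g u - g v| / (2 * r)⌋₊
  have hK : 2 * r * K ≤ |g u - g v| := by
    have := Nat.floor_le (div_nonneg (abs_nonneg (g u - g v)) (by positivity : (0 : ℝ) ≤ 2 * r))
    rwa [le_div_iff₀ (by positivity), mul_comm] at this
  have hlevel : ∀ j ≤ K, ∃ z ∈ Icc (0 : ℝ) 1, g z = min (g u) (g v) + 2 * r * j := by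
    intro j hj
    have hj' : 2 * r * j ≤ 2 * r * K := by gcongr
    have hmem : min (g u) (g v) + 2 * r * j ∈ uIcc (g u) (g v) := by
      refine ⟨le_add_of_nonneg_right (by positivity), ?_⟩
      have := max_sub_min_eq_abs' (g u) (g v)
      linarith
    obtain ⟨z, hz, hgz⟩ := intermediate_value_uIcc hg.continuousOn hmem
    exact ⟨z, uIcc_subset_Icc hu hv hz, hgz⟩
  choose! z hz hgz using hlevel
  have hsep : ∀ i ≤ K, ∀ j ≤ K, i ≠ j → r < treeDist g (z i) (z j) := by
    intro i hi j hj hij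
    have hij' : (1 : ℝ) ≤ |(i : ℝ) - j| := by
      exact_mod_cast Int.one_le_abs (sub_ne_zero.2 (Nat.cast_injective.ne hij : (i : ℤ) ≠ j))
    refine lt_of_lt_of_le ?_ (abs_sub_le_treeDist hg _ _)
    rw [hgz i hi, hgz j hj, add_sub_add_left_eq_sub, ← mul_sub, abs_mul,
      abs_of_pos (by positivity : (0 : ℝ) < 2 * r)]
    nlinarith
  have hinj : InjOn z (Finset.range (K + 1)) := by
    intro i hi j hj hzij
    by_contra hij
    have := hsep i (Nat.lt_succ_iff.1 (Finset.mem_range.1 hi)) j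
      (Nat.lt_succ_iff.1 (Finset.mem_range.1 hj)) hij
    rw [hzij, treeDist, uIcc_self, image_singleton, csInf_singleton] at this
    linarith
  calc K + 1 = ((Finset.range (K + 1)).image z).card := by
        rw [Finset.card_image_of_injOn hinj, Finset.card_range]
    _ ≤ Nsep (treeDist g) (Icc 0 1) r := by
        refine le_Nsep hg hr (fun _ hy => ?_) ?_
        · obtain ⟨j, hj, rfl⟩ := Finset.mem_image.1 hy
          exact hz j (Nat.lt_succ_iff.1 (Finset.mem_range.1 hj))
        simp only [Finset.mem_image, Finset.mem_range, Nat.lt_succ_iff]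
        rintro _ ⟨i, hi, rfl⟩ _ ⟨j, hj, rfl⟩ hne
        exact hsep i hi j hj (ne_of_apply_ne z hne)

lemma one_le_ubdTree (hg : Continuous g) {u v : ℝ} (hu : u ∈ Icc (0 : ℝ) 1)
    (hv : v ∈ Icc (0 : ℝ) 1) (hne : g u ≠ g v) : 1 ≤ ubdTree g := by
  rw [← ENNReal.ofReal_one]
  have hc : 0 < |g u - g v| / 2 := by positivity [sub_ne_zero.2 hne]
  refine le_ubdOf_of_eventually_le hc (eventually_nhdsWithin_of_forall fun r (hr : 0 < r) => ?_)
  calc |g u - g v| / 2 * r ^ (-1 : ℝ) = |g u - g v| / (2 * r) := by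
        rw [Real.rpow_neg_one]
        field_simp
    _ ≤ ⌊|g u - g v| / (2 * r)⌋₊ + 1 := (Nat.lt_floor_add_one _).le
    _ ≤ Nsep (treeDist g) (Icc 0 1) r := by exact_mod_cast floor_add_one_le_Nsep hg hu hv hr

end LowerBound

section Excursion

variable {f : ℝ → ℝ} {a p q : ℝ}

lemma exists_mem_Icc_add_ne (hper : ∀ x, f (x + 1) = f x) (hnc : ∃ x y, f x ≠ f y) (a : ℝ) :
    ∃ t ∈ Icc (0 : ℝ) 1, f (t + a) ≠ f a := by
  obtain ⟨x, y, hxy⟩ := hnc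
  obtain ⟨w, hw⟩ : ∃ w, f w ≠ f a := by
    by_contra! h
    exact hxy ((h x).trans (h y).symm)
  obtain ⟨t, ht, hft⟩ :=
    ((show Function.Periodic f 1 from hper).add_const a).exists_mem_Ico₀ one_pos (w - a)
  refine ⟨t, Ico_subset_Icc_self ht, ?_⟩
  rwa [← hft, sub_add_cancel]

lemma ubdTree_le_of_pVar_ne_top (hf : Continuous f) (hper : ∀ x, f (x + 1) = f x)
    (ha : a ∈ Icc (0 : ℝ) 1) (hq : 0 ≤ q) (hfin : pVar f q ≠ ⊤) :
    ubdTree (fun x => f (x + a) - f a) ≤ ENNReal.ofReal q := by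
  set g := fun x => f (x + a) - f a
  have hg : Continuous g := by fun_prop
  set V := (pVar f q).toReal
  refine ubdOf_le_of_eventually_le (C := 2 * V * 2 ^ q + 2) (by positivity) ?_
  filter_upwards [Ioo_mem_nhdsGT one_pos] with r ⟨hr0, hr1⟩
  have hone : 1 ≤ r ^ (-q) := Real.one_le_rpow_of_pos_of_le_one_of_nonpos hr0 hr1.le (by linarith)
  have hN : (Nsep (treeDist g) (Icc 0 1) r : ℝ) ≤ maxBigCount g (r / 2) + 1 := by
    exact_mod_cast Nsep_le_maxBigCount_add_one hg hr0
  have hgf : (maxBigCount g (r / 2) : ℝ) ≤ 2 * maxBigCount f (r / 2) + 1 := by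
    exact_mod_cast maxBigCount_rotate_le hf hper ha (half_pos hr0)
  have hfV : (maxBigCount f (r / 2) : ℝ) ≤ V * (r / 2) ^ (-q) :=
    maxBigCount_le_of_pVar_ne_top hq (half_pos hr0) hfin
  have hscale : (r / 2) ^ (-q) = 2 ^ q * r ^ (-q) := by
    rw [Real.div_rpow hr0.le zero_le_two, Real.rpow_neg zero_le_two, div_inv_eq_mul, mul_comm]
  have : 0 ≤ V * 2 ^ q * r ^ (-q) := by positivity
  calc (Nsep (treeDist g) (Icc 0 1) r : ℝ) ≤ 2 * (V * (r / 2) ^ (-q)) + 2 := by linarith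
    _ ≤ (2 * V * 2 ^ q + 2) * r ^ (-q) := by rw [hscale]; nlinarith

lemma pVar_ne_top_of_ubdTree_lt (hf : Continuous f) (hper : ∀ x, f (x + 1) = f x)
    (ha : a ∈ Icc (0 : ℝ) 1) (hqp : q < p)
    (hlt : ubdTree (fun x => f (x + a) - f a) < ENNReal.ofReal q) : pVar f p ≠ ⊤ := by
  set g := fun x => f (x + a) - f a
  have hg : Continuous g := by fun_prop
  have hq : 0 < q := ENNReal.ofReal_pos.1 (bot_le.trans_lt hlt)
  obtain ⟨u, hu, hsmall⟩ := mem_nhdsGT_iff_exists_Ioo_subset.1 (eventually_le_rpow_of_ubdOf_lt hlt)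
  set N₀ := Nsep (treeDist g) (Icc 0 1) (u / 2)
  have hN : ∀ s > 0, (Nsep (treeDist g) (Icc 0 1) s : ℝ) ≤ s ^ (-q) + N₀ := by
    intro s hs
    rcases lt_or_ge s u with hsu | hsu
    · have : (Nsep (treeDist g) (Icc 0 1) s : ℝ) ≤ s ^ (-q) := hsmall ⟨hs, hsu⟩
      linarith [N₀.cast_nonneg (α := ℝ)]
    · have : (Nsep (treeDist g) (Icc 0 1) s : ℝ) ≤ N₀ := by
        exact_mod_cast Nsep_anti hg (half_pos hu) (by linarith)
      linarith [Real.rpow_pos_of_pos hs (-q)]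
  refine pVar_ne_top_of_bigCount_le hf hq.le hqp (A := 4) (B := 4 * N₀ + 1) fun s hs n x hx => ?_
  have hfg : (bigCount f s n x : ℝ) ≤ 2 * maxBigCount g s + 1 := by
    exact_mod_cast (le_maxBigCount hf hs hx).trans (maxBigCount_le_rotate hf hper ha hs)
  have hgN : (maxBigCount g s : ℝ) ≤ 2 * Nsep (treeDist g) (Icc 0 1) s := by
    exact_mod_cast maxBigCount_le fun n x hx => bigCount_le_two_mul_Nsep hg hs hx
  linarith [hN s hs]

end Excursion

lemma varIndex_eq_of_forall {f : ℝ → ℝ} {d : ℝ≥0∞} (h1 : 1 ≤ d)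
    (hle : ∀ q, 1 ≤ q → pVar f q ≠ ⊤ → d ≤ ENNReal.ofReal q)
    (hge : ∀ q p, q < p → d < ENNReal.ofReal q → pVar f p ≠ ⊤) : varIndex f = d := by
  refine le_antisymm (sup_le h1 (iSup₂_le fun p _ => iSup_le fun htop => ?_))
    (le_of_not_gt fun hlt => ?_)
  · by_contra! hdp
    obtain ⟨q, -, hdq, hqp⟩ := ENNReal.lt_iff_exists_real_btwn.1 hdp
    exact hge q p (ENNReal.ofReal_lt_ofReal_iff'.1 hqp).1 hdq htop
  · obtain ⟨q, -, hIq, hqd⟩ := ENNReal.lt_iff_exists_real_btwn.1 hlt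
    have hq : 1 ≤ q := by
      have := (le_sup_left : 1 ≤ varIndex f).trans_lt hIq
      rw [← ENNReal.ofReal_one] at this
      exact (ENNReal.ofReal_lt_ofReal_iff'.1 this).1.le
    have hfin : pVar f q ≠ ⊤ := fun htop =>
      hIq.not_ge (le_sup_of_le_right (le_iSup₂_of_le q hq (le_iSup_of_le htop le_rfl)))
    exact (hle q hq hfin).not_gt hqd

theorem picard_ubd_tree_eq_varIndex_general (f : ℝ → ℝ) (hf : Continuous f)
    (hper : ∀ x, f (x + 1) = f x) (hnc : ∃ x y, f x ≠ f y)
    (a : ℝ) (ha : a ∈ Set.Icc (0 : ℝ) 1) :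
    ubdTree (fun x => f (x + a) - f a) = varIndex f := by
  obtain ⟨t, ht, hne⟩ := exists_mem_Icc_add_ne hper hnc a
  have h1 : 1 ≤ ubdTree (fun x => f (x + a) - f a) :=
    one_le_ubdTree (by fun_prop) ht ⟨le_rfl, zero_le_one⟩ (by simpa [sub_eq_zero] using hne)
  refine (varIndex_eq_of_forall h1 (fun q hq hfin => ?_) fun q p hqp hlt => ?_).symm
  · exact ubdTree_le_of_pVar_ne_top hf hper ha (zero_le_one.trans hq) hfin
  · exact pVar_ne_top_of_ubdTree_lt hf hper ha hqp hlt

/-- **Picard's theorem.** For a non-constant continuous circle mapping `f` (modelled as a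
1-periodic continuous function on `ℝ`), the upper box dimension of the real tree `T(f)`
(the tree of the excursion `x ↦ f(x + a) - f(a)`, `a` a minimizer of `f`) equals the
variation index `I(f)`. -/
theorem picard_ubd_tree_eq_varIndex (f : ℝ → ℝ) (hf : Continuous f)
    (hper : ∀ x, f (x + 1) = f x) (hnc : ∃ x y, f x ≠ f y)
    (a : ℝ) (ha : a ∈ Set.Icc (0 : ℝ) 1) (hmin : ∀ x ∈ Set.Icc (0 : ℝ) 1, f a ≤ f x) :
    ubdTree (fun x => f (x + a) - f a) = varIndex f :=
  picard_ubd_tree_eq_varIndex_general f hf hper hnc a ha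

end
end

section
/- Let f : S^1 → ℝ be a continuous circle mapping with V^p(f) < ∞ for some p ≥ 1, and write v = V^p(f). Then there exists a homeomorphism τ : S^1 → S^1 such that f∘τ is (1/p)-Hölder; indeed |f∘τ(a) − f∘τ(b)| ≤ (2v)^{1/p}·|a − b|^{1/p} for all a, b. -/
open Set Filter Metric Topology
open scoped ENNReal NNReal

/-!
Write `V(x) = V^p(f; [0, x])` and `v = V(1)`. Superadditivity of the `p`-variation over adjacent
intervals gives `|f x - f y|^p ≤ V(y) - V(x)` for `x ≤ y`, so the time
`h(x) = (x + V(x) / v) / 2`, which increases strictly from `h 0 = 0` to `h 1 = 1`, satisfies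
`|f x - f y|^p ≤ 2v (h y - h x)`; the circle homeomorphism is the lift of `h⁻¹`.

The substance is the continuity of `V`, which makes `h` a homeomorphism of `[0, 1]`. Lower
semicontinuity holds because `V^p(f; [a, b])` is a supremum of continuous functions of `(a, b)`:
the sums along a fixed monotone sequence clamped into `[a, b]`. For the upper bound, Minkowski's
inequality gives `V(y)^(1/p) ≤ V(x)^(1/p) + V^p(f; [x, y])^(1/p)`, and `V^p(f; [x, y]) → 0` as
`y ↓ x`: by lower semicontinuity in the left endpoint `V^p(f; [y, b])` is close to
`V^p(f; [x, b])`, and superadditivity bounds `V^p(f; [x, y])` by their difference.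
-/

noncomputable section

/-- The `p`-variation of `f` on `s`, defined like `eVariationOn` (the case `p = 1`) as a supremum
over monotone sequences in `s`, repetitions allowed. -/
def pVariationOn {α E : Type*} [LinearOrder α] [PseudoEMetricSpace E] (f : α → E) (p : ℝ)
    (s : Set α) : ℝ≥0∞ :=
  ⨆ q : ℕ × {u : ℕ → α // Monotone u ∧ ∀ i, u i ∈ s},
    ∑ i ∈ Finset.range q.1, edist (f (q.2.1 (i + 1))) (f (q.2.1 i)) ^ p

section

variable {α E : Type*} [LinearOrder α] [PseudoEMetricSpace E]

theorem edist_le_edist_min_add_edist_max (f : α → E) (x y t : α) :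
    edist (f y) (f x) ≤
      edist (f (min y t)) (f (min x t)) + edist (f (max y t)) (f (max x t)) := by
  rcases le_total x t with hx | hx <;> rcases le_total y t with hy | hy
  · simp [hx, hy]
  · simpa [hx, hy, edist_comm] using edist_triangle_right (f x) (f y) (f t)
  · simpa [hx, hy, edist_comm, add_comm] using edist_triangle_right (f y) (f x) (f t)
  · simp [hx, hy]

namespace pVariationOn

variable {f : α → E} {p : ℝ}

theorem sum_le {s : Set α} {u : ℕ → α} (hu : Monotone u) (us : ∀ i, u i ∈ s) (n : ℕ) :
    ∑ i ∈ Finset.range n, edist (f (u (i + 1))) (f (u i)) ^ p ≤ pVariationOn f p s :=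
  le_iSup_of_le ⟨n, u, hu, us⟩ le_rfl

theorem mono {s t : Set α} (hst : s ⊆ t) : pVariationOn f p s ≤ pVariationOn f p t :=
  iSup_le fun ⟨n, _, hu, us⟩ => sum_le hu (fun i => hst (us i)) n

theorem eq_zero_of_subsingleton {s : Set α} (hs : s.Subsingleton) (hp : 0 < p) :
    pVariationOn f p s = 0 :=
  ENNReal.iSup_eq_zero.2 fun ⟨n, u, _, us⟩ => Finset.sum_eq_zero fun i _ => by
    dsimp only
    rw [hs (us (i + 1)) (us i), edist_self, ENNReal.zero_rpow_of_pos hp]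

theorem empty : pVariationOn f p ∅ = 0 :=
  ENNReal.iSup_eq_zero.2 fun q => (q.2.2.2 0).elim

theorem add_le_union {s t : Set α} (h : ∀ x ∈ s, ∀ y ∈ t, x ≤ y) :
    pVariationOn f p s + pVariationOn f p t ≤ pVariationOn f p (s ∪ t) := by
  rcases s.eq_empty_or_nonempty with rfl | ⟨x, hx⟩
  · simp [empty]
  rcases t.eq_empty_or_nonempty with rfl | ⟨y, hy⟩
  · simp [empty]
  have : Nonempty {u : ℕ → α // Monotone u ∧ ∀ i, u i ∈ s} :=
    ⟨⟨_, monotone_const, fun _ => hx⟩⟩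
  have : Nonempty {u : ℕ → α // Monotone u ∧ ∀ i, u i ∈ t} :=
    ⟨⟨_, monotone_const, fun _ => hy⟩⟩
  refine ENNReal.iSup_add_iSup_le fun ⟨n, u, hu, us⟩ ⟨m, v, hv, vt⟩ => ?_
  let w i := if i ≤ n then u i else v (i - (n + 1))
  have hw : Monotone w := by
    intro i j hij
    simp only [w]
    split_ifs with hi hj hj
    · exact hu hij
    · exact h _ (us _) _ (vt _)
    · omega
    · exact hv (by omega)
  calc ∑ i ∈ Finset.range n, edist (f (u (i + 1))) (f (u i)) ^ p
        + ∑ i ∈ Finset.range m, edist (f (v (i + 1))) (f (v i)) ^ p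
      = ∑ i ∈ Finset.range n, edist (f (w (i + 1))) (f (w i)) ^ p
        + ∑ i ∈ Finset.range m, edist (f (w (n + 1 + i + 1))) (f (w (n + 1 + i))) ^ p := by
        congr 1
        · refine Finset.sum_congr rfl fun i hi => ?_
          have := Finset.mem_range.1 hi
          simp only [w, if_pos (show i + 1 ≤ n by omega), if_pos (show i ≤ n by omega)]
        · refine Finset.sum_congr rfl fun i _ => ?_
          simp only [w, if_neg (show ¬ n + 1 + i + 1 ≤ n by omega),
            if_neg (show ¬ n + 1 + i ≤ n by omega)]
          congr 4 <;> omega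
    _ ≤ ∑ i ∈ Finset.range (n + 1 + m), edist (f (w (i + 1))) (f (w i)) ^ p := by
        rw [Finset.sum_range_add, Finset.sum_range_succ]
        gcongr
        exact le_self_add
    _ ≤ pVariationOn f p (s ∪ t) := sum_le hw (fun i => by
        simp only [w]; split_ifs
        exacts [Or.inl (us _), Or.inr (vt _)]) _

theorem Icc_add_Icc_le {a b c : α} (hab : a ≤ b) (hbc : b ≤ c) :
    pVariationOn f p (Icc a b) + pVariationOn f p (Icc b c) ≤ pVariationOn f p (Icc a c) := by
  rw [← Icc_union_Icc_eq_Icc hab hbc]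
  exact add_le_union fun x hx y hy => hx.2.trans hy.1

theorem edist_rpow_le {s : Set α} {x y : α} (hx : x ∈ s) (hy : y ∈ s) :
    edist (f y) (f x) ^ p ≤ pVariationOn f p s := by
  wlog hxy : x ≤ y generalizing x y
  · rw [edist_comm]; exact this hy hx (le_of_not_ge hxy)
  have hu : Monotone fun i : ℕ => if i = 0 then x else y := by
    intro i j hij; dsimp only; split_ifs <;> first | exact le_rfl | exact hxy | omega
  simpa using sum_le (f := f) (p := p) hu (fun i => by split_ifs <;> assumption) 1

theorem edist_rpow_add_le {a x y : α} (hax : a ≤ x) (hxy : x ≤ y) :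
    pVariationOn f p (Icc a x) + edist (f y) (f x) ^ p ≤ pVariationOn f p (Icc a y) :=
  (add_le_add le_rfl (edist_rpow_le (s := Icc x y) ⟨le_rfl, hxy⟩ ⟨hxy, le_rfl⟩)).trans
    (Icc_add_Icc_le hax hxy)

theorem edist_eq_zero_of_eq_zero (hp : 0 < p) {s : Set α} (hs : pVariationOn f p s = 0) {x y : α}
    (hx : x ∈ s) (hy : y ∈ s) : edist (f y) (f x) = 0 := by
  have h := edist_rpow_le (f := f) (p := p) hx hy
  rw [hs, nonpos_iff_eq_zero, ENNReal.rpow_eq_zero_iff] at h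
  exact h.elim And.left fun h' => absurd h'.2 (not_lt.2 hp.le)

theorem rpow_one_div_Icc_le_add (hp : 1 ≤ p) {a t b : α} (hat : a ≤ t) (htb : t ≤ b) :
    pVariationOn f p (Icc a b) ^ (1 / p) ≤
      pVariationOn f p (Icc a t) ^ (1 / p) + pVariationOn f p (Icc t b) ^ (1 / p) := by
  have hp0 : 0 < p := zero_lt_one.trans_le hp
  rw [one_div, ENNReal.rpow_inv_le_iff hp0]
  refine iSup_le fun ⟨n, u, hu, us⟩ => ?_
  rw [← ENNReal.rpow_inv_le_iff hp0, ← one_div]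
  calc (∑ i ∈ Finset.range n, edist (f (u (i + 1))) (f (u i)) ^ p) ^ (1 / p)
      ≤ (∑ i ∈ Finset.range n, (edist (f (min (u (i + 1)) t)) (f (min (u i) t))
          + edist (f (max (u (i + 1)) t)) (f (max (u i) t))) ^ p) ^ (1 / p) := by
        gcongr with i
        exact edist_le_edist_min_add_edist_max f _ _ t
    _ ≤ _ := ENNReal.Lp_add_le _ _ _ hp
    _ ≤ _ := by
        gcongr
        · exact sum_le (s := Icc a t) (fun i j hij => min_le_min_right t (hu hij))
            (fun i => ⟨le_min (us i).1 hat, min_le_right _ _⟩) n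
        · exact sum_le (s := Icc t b) (fun i j hij => max_le_max_right t (hu hij))
            (fun i => ⟨le_max_right _ _, max_le (us i).2 htb⟩) n

theorem sum_clamp_le (hp : 0 < p) {u : ℕ → α} (hu : Monotone u) (a b : α) (n : ℕ) :
    ∑ i ∈ Finset.range n, edist (f (max a (min (u (i + 1)) b))) (f (max a (min (u i) b))) ^ p
      ≤ pVariationOn f p (Icc a b) := by
  by_cases hab : a ≤ b
  · exact sum_le (s := Icc a b) (fun i j hij => max_le_max_left a (min_le_min_right b (hu hij)))
      (fun i => ⟨le_max_left _ _, max_le hab (min_le_right _ _)⟩) n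
  · have hclamp : ∀ x, max a (min x b) = a := fun x =>
      max_eq_left ((min_le_right x b).trans (not_le.1 hab).le)
    simp [hclamp, ENNReal.zero_rpow_of_pos hp]

variable [TopologicalSpace α] [OrderClosedTopology α]

theorem lowerSemicontinuous_Icc (hf : Continuous f) (hp : 0 < p) :
    LowerSemicontinuous fun q : α × α => pVariationOn f p (Icc q.1 q.2) := by
  have hsup : (fun q : α × α => pVariationOn f p (Icc q.1 q.2)) = fun q =>
      ⨆ r : ℕ × {u : ℕ → α // Monotone u}, ∑ i ∈ Finset.range r.1,
        edist (f (max q.1 (min (r.2.1 (i + 1)) q.2))) (f (max q.1 (min (r.2.1 i) q.2))) ^ p := by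
    funext q
    refine le_antisymm (iSup_le fun ⟨n, u, hu, us⟩ => le_iSup_of_le ⟨n, u, hu⟩ ?_)
      (iSup_le fun ⟨n, u, hu⟩ => sum_clamp_le hp hu q.1 q.2 n)
    have hclamp : ∀ i, max q.1 (min (u i) q.2) = u i := fun i => by
      rw [min_eq_left (us i).2, max_eq_right (us i).1]
    simp only [hclamp, le_refl]
  rw [hsup]
  refine lowerSemicontinuous_iSup fun r => Continuous.lowerSemicontinuous ?_
  refine continuous_finsetSum _ fun i _ => ENNReal.continuous_rpow_const.comp ?_
  exact Continuous.edist (hf.comp (by fun_prop)) (hf.comp (by fun_prop))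

theorem tendsto_Icc_nhdsGT_zero (hf : Continuous f) (hp : 0 < p) {t b : α} (htb : t < b)
    (hfin : pVariationOn f p (Icc t b) ≠ ∞) :
    Tendsto (fun s => pVariationOn f p (Icc t s)) (𝓝[>] t) (𝓝 0) := by
  refine ENNReal.tendsto_nhds_zero.2 fun ε hε => ?_
  rcases eq_or_ne (pVariationOn f p (Icc t b)) 0 with h0 | h0
  · filter_upwards [Ioo_mem_nhdsGT htb] with s hs
    exact (mono (Icc_subset_Icc_right hs.2.le)).trans ((le_of_eq h0).trans zero_le)
  have hlsc : ∀ᶠ s in 𝓝 t, pVariationOn f p (Icc t b) - ε < pVariationOn f p (Icc s b) :=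
    (Continuous.prodMk_left b).tendsto t |>.eventually <|
      lowerSemicontinuous_Icc hf hp (t, b) _ (ENNReal.sub_lt_self hfin h0 hε.ne')
  filter_upwards [Ioo_mem_nhdsGT htb, nhdsWithin_le_nhds hlsc] with s hs hsb
  have hfin' : pVariationOn f p (Icc s b) ≠ ∞ :=
    ne_top_of_le_ne_top hfin (mono (Icc_subset_Icc_left hs.1.le))
  refine (ENNReal.add_le_add_iff_right hfin').1 ?_
  calc pVariationOn f p (Icc t s) + pVariationOn f p (Icc s b)
      ≤ pVariationOn f p (Icc t b) := Icc_add_Icc_le hs.1.le hs.2.le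
    _ ≤ ε + pVariationOn f p (Icc s b) := by
        rw [add_comm]; exact tsub_le_iff_right.1 hsb.le

theorem tendsto_Icc_nhdsGT (hf : Continuous f) (hp : 1 ≤ p) {a t b : α} (hat : a ≤ t)
    (htb : t < b) (hfin : pVariationOn f p (Icc a b) ≠ ∞) :
    Tendsto (fun x => pVariationOn f p (Icc a x)) (𝓝[>] t)
      (𝓝 (pVariationOn f p (Icc a t))) := by
  have hp0 : 0 < p := zero_lt_one.trans_le hp
  have hsmall := tendsto_Icc_nhdsGT_zero hf hp0 htb
    (ne_top_of_le_ne_top hfin (mono (Icc_subset_Icc_left hat)))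
  have hbound : Tendsto (fun x => (pVariationOn f p (Icc a t) ^ (1 / p)
      + pVariationOn f p (Icc t x) ^ (1 / p)) ^ p) (𝓝[>] t)
      (𝓝 (pVariationOn f p (Icc a t))) := by
    have := (((ENNReal.continuous_rpow_const (y := 1 / p)).tendsto 0).comp hsmall).const_add
      (pVariationOn f p (Icc a t) ^ (1 / p))
    rw [ENNReal.zero_rpow_of_pos (by positivity), add_zero] at this
    have h := (ENNReal.continuous_rpow_const (y := p)).tendsto _ |>.comp this
    simp only [Function.comp_def] at h
    convert h using 2
    rw [one_div, ENNReal.rpow_inv_rpow hp0.ne']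
  refine tendsto_of_tendsto_of_tendsto_of_le_of_le' tendsto_const_nhds hbound ?_ ?_
  · filter_upwards [self_mem_nhdsWithin] with x hx
    exact mono (Icc_subset_Icc_right (le_of_lt hx))
  · filter_upwards [self_mem_nhdsWithin] with x hx
    have hmink := rpow_one_div_Icc_le_add (f := f) hp hat (le_of_lt hx)
    rw [one_div, ENNReal.rpow_inv_le_iff hp0, ← one_div] at hmink
    exact hmink

theorem continuousOn_Icc (hf : Continuous f) (hp : 1 ≤ p) {a b : α}
    (hfin : pVariationOn f p (Icc a b) ≠ ∞) :
    ContinuousOn (fun x => pVariationOn f p (Icc a x)) (Icc a b) := by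
  intro t ht
  rw [continuousWithinAt_iff_lower_upperSemicontinuousWithinAt]
  refine ⟨((lowerSemicontinuous_Icc hf (zero_lt_one.trans_le hp)).comp
    (Continuous.prodMk_right a)).lowerSemicontinuousWithinAt _ t, fun y hy => ?_⟩
  have hleft : ∀ᶠ x in 𝓝[≤] t, pVariationOn f p (Icc a x) < y :=
    eventually_nhdsWithin_of_forall fun x hx => (mono (Icc_subset_Icc_right hx)).trans_lt hy
  have hright : ∀ᶠ x in 𝓝[>] t, x ∈ Icc a b → pVariationOn f p (Icc a x) < y := by
    rcases ht.2.eq_or_lt with rfl | htb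
    · exact eventually_nhdsWithin_of_forall fun x hx hxb => absurd hxb.2 (not_le.2 hx)
    · filter_upwards [(tendsto_order.1 (tendsto_Icc_nhdsGT hf hp ht.1 htb hfin)).2 y hy]
        with x hx _ using hx
  have hboth : ∀ᶠ x in 𝓝 t, x ∈ Icc a b → pVariationOn f p (Icc a x) < y := by
    rw [← nhdsLE_sup_nhdsGT]
    exact eventually_sup.2 ⟨hleft.mono fun x hx _ => hx, hright⟩
  exact eventually_nhdsWithin_iff.2 hboth

end pVariationOn

end

theorem edist_rpow_eq_ofReal {p : ℝ} (hp : 0 ≤ p) (x y : ℝ) :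
    edist x y ^ p = ENNReal.ofReal (|x - y| ^ p) := by
  rw [edist_dist, Real.dist_eq, ENNReal.ofReal_rpow_of_nonneg (abs_nonneg _) hp]

theorem exists_isPartition_varSum_eq (f : ℝ → ℝ) {p : ℝ} (hp : p ≠ 0) {u : ℕ → ℝ}
    (hu : Monotone u) (us : ∀ i, u i ∈ Icc (0 : ℝ) 1) (n : ℕ) :
    ∃ m x, IsPartition m x ∧ x (Fin.last m) = u n ∧
      varSum f p m x = ∑ i ∈ Finset.range n, |f (u i) - f (u (i + 1))| ^ p := by
  induction n with
  | zero => exact ⟨0, fun _ => u 0, ⟨Fin.strictMono_iff_lt_succ.2 fun i => i.elim0,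
      fun _ => us 0⟩, rfl, by simp [varSum]⟩
  | succ n ih =>
    obtain ⟨m, x, hx, hlast, hsum⟩ := ih
    rw [Finset.sum_range_succ, ← hsum]
    rcases (hu n.le_succ).eq_or_lt with heq | hlt
    · refine ⟨m, x, hx, hlast.trans heq, ?_⟩
      rw [heq, sub_self, abs_zero, Real.zero_rpow hp, add_zero]
    refine ⟨m + 1, Fin.snoc x (u (n + 1)), ⟨Fin.strictMono_iff_lt_succ.2 fun i => ?_,
      fun i => ?_⟩, by simp, ?_⟩
    · induction i using Fin.lastCases with
      | last => simpa [hlast] using hlt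
      | cast j => simpa [Fin.succ_castSucc, -Fin.castSucc_succ] using hx.1 j.castSucc_lt_succ
    · induction i using Fin.lastCases with
      | last => simpa using us (n + 1)
      | cast j => simpa using hx.2 j
    · rw [varSum, Fin.sum_univ_castSucc, varSum]
      simp [Fin.succ_castSucc, -Fin.castSucc_succ, hlast]

theorem pVar_eq_pVariationOn (f : ℝ → ℝ) {p : ℝ} (hp : 0 < p) :
    pVar f p = pVariationOn f p (Icc 0 1) := by
  have hsum : ∀ n (u : ℕ → ℝ),
      ∑ i ∈ Finset.range n, edist (f (u (i + 1))) (f (u i)) ^ p =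
        ENNReal.ofReal (∑ i ∈ Finset.range n, |f (u i) - f (u (i + 1))| ^ p) := fun n u => by
    rw [ENNReal.ofReal_sum_of_nonneg fun i _ => by positivity]
    exact Finset.sum_congr rfl fun i _ => by rw [edist_rpow_eq_ofReal hp.le, abs_sub_comm]
  apply le_antisymm
  · refine iSup_le fun n => iSup_le fun x => iSup_le fun hx => ?_
    let u : ℕ → ℝ := fun i => x ⟨min i n, by omega⟩
    have hu : Monotone u := fun i j hij => hx.1.monotone (Fin.mk_le_mk.2 (min_le_min_right n hij))
    refine (le_of_eq ?_).trans (pVariationOn.sum_le hu (fun i => hx.2 _) n)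
    rw [hsum, varSum, ← Fin.sum_univ_eq_sum_range (fun i => |f (u i) - f (u (i + 1))| ^ p)]
    congr 1
    refine Finset.sum_congr rfl fun i _ => ?_
    have hi : min (i : ℕ) n = i := min_eq_left i.isLt.le
    have hi' : min ((i : ℕ) + 1) n = i + 1 := min_eq_left i.isLt
    simp only [u, hi, hi']
    rfl
  · refine iSup_le fun ⟨n, u, hu, us⟩ => ?_
    obtain ⟨m, x, hx, -, hx_sum⟩ := exists_isPartition_varSum_eq f hp.ne' hu us n
    rw [hsum, ← hx_sum]
    exact le_iSup_of_le m (le_iSup_of_le x (le_iSup_of_le hx le_rfl))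

theorem abs_sub_rpow_le_toReal_pVariationOn_sub {f : ℝ → ℝ} {p : ℝ} (hp : 0 ≤ p)
    {a x y : ℝ} (hax : a ≤ x) (hxy : x ≤ y) (hfin : pVariationOn f p (Icc a y) ≠ ∞) :
    |f x - f y| ^ p ≤
      (pVariationOn f p (Icc a y)).toReal - (pVariationOn f p (Icc a x)).toReal := by
  have h := ENNReal.toReal_mono hfin (pVariationOn.edist_rpow_add_le (f := f) (p := p) hax hxy)
  rw [edist_rpow_eq_ofReal hp, ENNReal.toReal_add (ne_top_of_le_ne_top hfin
    (pVariationOn.mono (Icc_subset_Icc_right hxy))) ENNReal.ofReal_ne_top,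
    ENNReal.toReal_ofReal (by positivity), abs_sub_comm] at h
  linarith

theorem exists_orderIso_add_one_eqOn {h : ℝ → ℝ} (hcont : ContinuousOn h (Icc 0 1))
    (hmono : StrictMonoOn h (Icc 0 1)) (h0 : h 0 = 0) (h1 : h 1 = 1) :
    ∃ e : ℝ ≃o ℝ, (∀ x, e (x + 1) = e x + 1) ∧ EqOn e h (Icc 0 1) := by
  have hfract : ∀ x, h (Int.fract x) ∈ Ico 0 1 := fun x =>
    have hx : Int.fract x ∈ Icc (0 : ℝ) 1 := ⟨Int.fract_nonneg x, (Int.fract_lt_one x).le⟩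
    ⟨h0 ▸ hmono.monotoneOn ⟨le_rfl, zero_le_one⟩ hx (Int.fract_nonneg x),
      h1 ▸ hmono hx ⟨zero_le_one, le_rfl⟩ (Int.fract_lt_one x)⟩
  let H : ℝ → ℝ := fun x => ⌊x⌋ + h (Int.fract x)
  have hH : StrictMono H := by
    intro x y hxy
    rcases (Int.floor_mono hxy.le).eq_or_lt with heq | hlt
    · have hfr : Int.fract x < Int.fract y := by
        rw [Int.fract, Int.fract, heq]; linarith
      simp only [H, heq]
      exact add_lt_add_right (hmono ⟨Int.fract_nonneg x, (Int.fract_lt_one x).le⟩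
        ⟨Int.fract_nonneg y, (Int.fract_lt_one y).le⟩ hfr) _
    · have : (⌊x⌋ : ℝ) + 1 ≤ ⌊y⌋ := by exact_mod_cast hlt
      linarith [(hfract x).2, (hfract y).1]
  have hHsurj : Function.Surjective H := by
    intro c
    obtain ⟨z, hz, hzc⟩ := intermediate_value_Icc zero_le_one hcont
      (show Int.fract c ∈ Icc (h 0) (h 1) by
        rw [h0, h1]; exact ⟨Int.fract_nonneg c, (Int.fract_lt_one c).le⟩)
    have hz1 : z < 1 := hz.2.lt_of_ne fun hz1 => (Int.fract_lt_one c).ne (by rw [← hzc, hz1, h1])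
    refine ⟨⌊c⌋ + z, ?_⟩
    simp only [H, Int.floor_intCast_add, Int.fract_intCast_add,
      Int.floor_eq_zero_iff.2 ⟨hz.1, hz1⟩, Int.fract_eq_self.2 ⟨hz.1, hz1⟩, hzc, add_zero,
      Int.floor_add_fract]
  refine ⟨StrictMono.orderIsoOfSurjective H hH hHsurj, fun x => ?_, fun x hx => ?_⟩
  · change H (x + 1) = H x + 1
    simp only [H, Int.floor_add_one, Int.fract_add_one]
    push_cast
    ring
  · change H x = h x
    rcases hx.2.eq_or_lt with rfl | hx1
    · simp [H, h0, h1]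
    · simp [H, Int.floor_eq_zero_iff.2 ⟨hx.1, hx1⟩, Int.fract_eq_self.2 ⟨hx.1, hx1⟩]

theorem exists_isCircleHomeoLift_rightInvOn {h : ℝ → ℝ} (hcont : ContinuousOn h (Icc 0 1))
    (hmono : StrictMonoOn h (Icc 0 1)) (h0 : h 0 = 0) (h1 : h 1 = 1) :
    ∃ τ, IsCircleHomeoLift τ ∧ MapsTo τ (Icc 0 1) (Icc 0 1) ∧
      RightInvOn τ h (Icc 0 1) := by
  obtain ⟨e, he, heq⟩ := exists_orderIso_add_one_eqOn hcont hmono h0 h1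
  have hmaps : MapsTo e.symm (Icc 0 1) (Icc 0 1) := fun a ha =>
    ⟨e.le_symm_apply.2 (by rw [heq ⟨le_rfl, zero_le_one⟩, h0]; exact ha.1),
      e.symm_apply_le.2 (by rw [heq ⟨zero_le_one, le_rfl⟩, h1]; exact ha.2)⟩
  refine ⟨e.symm, ⟨e.symm.continuous, e.symm.bijective, Or.inl fun x => e.symm_apply_eq.2 ?_⟩,
    hmaps, fun a ha => (heq (hmaps ha)).symm.trans (e.apply_symm_apply a)⟩
  rw [he, e.apply_symm_apply]

def variationTime (f : ℝ → ℝ) (p x : ℝ) : ℝ :=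
  (x + (pVariationOn f p (Icc 0 x)).toReal / (pVariationOn f p (Icc 0 1)).toReal) / 2

section variationTime

variable {f : ℝ → ℝ} {p : ℝ}

theorem variationTime_zero (hp : 0 < p) : variationTime f p 0 = 0 := by
  rw [variationTime, Icc_self, pVariationOn.eq_zero_of_subsingleton subsingleton_singleton hp]
  simp

theorem variationTime_one (hv : (pVariationOn f p (Icc 0 1)).toReal ≠ 0) :
    variationTime f p 1 = 1 := by
  rw [variationTime, div_self hv]
  norm_num

theorem abs_sub_rpow_le_variationTime_sub (hp : 0 ≤ p) (hfin : pVariationOn f p (Icc 0 1) ≠ ∞)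
    (hv : (pVariationOn f p (Icc 0 1)).toReal ≠ 0) {x y : ℝ} (hx : 0 ≤ x) (hxy : x ≤ y)
    (hy : y ≤ 1) :
    |f x - f y| ^ p ≤
      2 * (pVariationOn f p (Icc 0 1)).toReal * (variationTime f p y - variationTime f p x) := by
  have hfin' := ne_top_of_le_ne_top hfin (pVariationOn.mono (Icc_subset_Icc_right hy))
  have hbound := abs_sub_rpow_le_toReal_pVariationOn_sub hp hx hxy hfin'
  have hexpand : 2 * (pVariationOn f p (Icc 0 1)).toReal *
      (variationTime f p y - variationTime f p x) = (pVariationOn f p (Icc 0 1)).toReal * (y - x)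
        + ((pVariationOn f p (Icc 0 y)).toReal - (pVariationOn f p (Icc 0 x)).toReal) := by
    simp only [variationTime]
    field_simp
    ring
  rw [hexpand]
  have := mul_nonneg (ENNReal.toReal_nonneg (a := pVariationOn f p (Icc 0 1))) (sub_nonneg.2 hxy)
  linarith

theorem strictMonoOn_variationTime (hfin : pVariationOn f p (Icc 0 1) ≠ ∞)
    (hv : 0 < (pVariationOn f p (Icc 0 1)).toReal) :
    StrictMonoOn (variationTime f p) (Icc 0 1) := by
  intro x hx y hy hxy
  have hmono := ENNReal.toReal_mono
    (ne_top_of_le_ne_top hfin (pVariationOn.mono (Icc_subset_Icc_right hy.2)))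
    (pVariationOn.mono (f := f) (p := p) (Icc_subset_Icc_right hxy.le))
  simp only [variationTime]
  gcongr ?_ / 2
  exact add_lt_add_of_lt_of_le hxy (div_le_div_of_nonneg_right hmono hv.le)

theorem continuousOn_variationTime (hf : Continuous f) (hp : 1 ≤ p)
    (hfin : pVariationOn f p (Icc 0 1) ≠ ∞) : ContinuousOn (variationTime f p) (Icc 0 1) := by
  have hV : ContinuousOn (fun x => (pVariationOn f p (Icc 0 x)).toReal) (Icc 0 1) := fun x hx =>
    (ENNReal.continuousAt_toReal (ne_top_of_le_ne_top hfin (pVariationOn.mono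
      (Icc_subset_Icc_right hx.2)))).comp_continuousWithinAt
        (f := fun x => pVariationOn f p (Icc 0 x)) (pVariationOn.continuousOn_Icc hf hp hfin x hx)
  exact ((continuousOn_id.add (hV.div_const _)).div_const 2)

end variationTime

theorem exists_timeChange_holder_general (f : ℝ → ℝ) (hf : Continuous f)
    (p : ℝ) (hp : 1 ≤ p) (hfin : pVar f p ≠ ⊤) :
    ∃ τ : ℝ → ℝ, IsCircleHomeoLift τ ∧
      ∀ a ∈ Set.Icc (0 : ℝ) 1, ∀ b ∈ Set.Icc (0 : ℝ) 1,
        |f (τ a) - f (τ b)| ≤ (2 * (pVar f p).toReal) ^ (1 / p) * |a - b| ^ (1 / p) := by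
  have hp0 : 0 < p := zero_lt_one.trans_le hp
  rw [pVar_eq_pVariationOn f hp0] at hfin ⊢
  rcases ENNReal.toReal_nonneg.eq_or_lt with hv | hv
  · refine ⟨id, ⟨continuous_id, Function.bijective_id, Or.inl fun _ => rfl⟩,
      fun a ha b hb => ?_⟩
    have hV : pVariationOn f p (Icc 0 1) = 0 :=
      ((ENNReal.toReal_eq_zero_iff _).1 hv.symm).resolve_right hfin
    rw [id, id, edist_eq_zero.1 (pVariationOn.edist_eq_zero_of_eq_zero hp0 hV hb ha), sub_self,
      abs_zero]
    positivity
  have hmono := strictMonoOn_variationTime hfin hv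
  obtain ⟨τ, hτ, hτmaps, hτinv⟩ := exists_isCircleHomeoLift_rightInvOn
    (continuousOn_variationTime hf hp hfin) hmono (variationTime_zero hp0)
    (variationTime_one hv.ne')
  refine ⟨τ, hτ, fun a ha b hb => ?_⟩
  wlog hab : a ≤ b generalizing a b
  · simpa only [abs_sub_comm] using this b hb a ha (le_of_not_ge hab)
  have hτab : τ a ≤ τ b :=
    (hmono.le_iff_le (hτmaps ha) (hτmaps hb)).1 (by rwa [hτinv ha, hτinv hb])
  have hbound :=
    abs_sub_rpow_le_variationTime_sub hp0.le hfin hv.ne' (hτmaps ha).1 hτab (hτmaps hb).2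
  rw [hτinv ha, hτinv hb] at hbound
  rw [abs_of_nonpos (sub_nonpos.2 hab), neg_sub, ← Real.mul_rpow (by positivity)
    (sub_nonneg.2 hab), one_div]
  exact (Real.le_rpow_inv_iff_of_pos (abs_nonneg _) (by positivity) hp0).2 hbound

/-- If a continuous circle mapping `f` has finite `p`-variation `v = V^p(f)` for some
`p ≥ 1`, then there is a circle homeomorphism `τ` such that `f ∘ τ` is `(1/p)`-Hölder,
indeed `|f∘τ(a) - f∘τ(b)| ≤ (2v)^{1/p} |a - b|^{1/p}`. -/
theorem exists_timeChange_holder (f : ℝ → ℝ) (hf : Continuous f)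
    (hper : ∀ x, f (x + 1) = f x) (p : ℝ) (hp : 1 ≤ p) (hfin : pVar f p ≠ ⊤) :
    ∃ τ : ℝ → ℝ, IsCircleHomeoLift τ ∧
      ∀ a ∈ Set.Icc (0 : ℝ) 1, ∀ b ∈ Set.Icc (0 : ℝ) 1,
        |f (τ a) - f (τ b)| ≤ (2 * (pVar f p).toReal) ^ (1 / p) * |a - b| ^ (1 / p) :=
  exists_timeChange_holder_general f hf p hp hfin
end
end

section
/- Let f be an excursion function, p ≥ 1 and r > 0. If the real tree T(f) contains N pairwise disjoint closed balls of radius r, then V^p(f) ≥ (N − 1)·r^p. -/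
open Set Filter Metric Topology
open scoped ENNReal NNReal

noncomputable section


section AuxPVar

lemma treeDist_self_aux (f : ℝ → ℝ) (x : ℝ) : treeDist f x x = 0 := by
  simp [treeDist]; ring

lemma key_interval (f : ℝ → ℝ) (hf : ContinuousOn f (Set.Icc 0 1))
    {a b r ε : ℝ} (hab : a < b) (ha : a ∈ Set.Icc (0:ℝ) 1) (hb : b ∈ Set.Icc (0:ℝ) 1)
    (hε : 0 < ε)
    (hsep : ∀ z ∈ Set.Icc (0:ℝ) 1, ¬(treeDist f a z ≤ r ∧ treeDist f b z ≤ r)) :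
    ∃ z, a < z ∧ z < b ∧ (r - ε ≤ |f a - f z| ∨ r - ε ≤ |f b - f z|) := by
  have hsub : Set.Icc a b ⊆ Set.Icc (0:ℝ) 1 := Set.Icc_subset_Icc ha.1 hb.2
  obtain ⟨w, hwmem, hw⟩ := isCompact_Icc.exists_isMinOn ⟨a, le_refl a, hab.le⟩ (hf.mono hsub)
  have hwlb : ∀ t ∈ Set.Icc a b, f w ≤ f t := fun t ht => hw ht
  have hInf : ∀ u v : ℝ, a ≤ u → u ≤ w → w ≤ v → v ≤ b → sInf (f '' Set.Icc u v) = f w := by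
    intro u v h1 h2 h3 h4
    have hs : Set.Icc u v ⊆ Set.Icc a b := Set.Icc_subset_Icc h1 h4
    have hlb : ∀ y ∈ f '' Set.Icc u v, f w ≤ y := by
      rintro y ⟨t, ht, rfl⟩; exact hwlb t (hs ht)
    have hmem : f w ∈ f '' Set.Icc u v := ⟨w, ⟨h2, h3⟩, rfl⟩
    exact le_antisymm (csInf_le ⟨f w, hlb⟩ hmem) (le_csInf ⟨f w, hmem⟩ hlb)
  have hda : treeDist f a w = f a - f w := by
    rw [treeDist, Set.uIcc_of_le hwmem.1, hInf a w le_rfl hwmem.1 le_rfl hwmem.2]; ring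
  have hdb : treeDist f b w = f b - f w := by
    rw [treeDist, Set.uIcc_of_ge hwmem.2, hInf w b hwmem.1 le_rfl hwmem.2 le_rfl]; ring
  have hcase : r < f a - f w ∨ r < f b - f w := by
    by_contra h
    push_neg at h
    exact hsep w (hsub hwmem) ⟨by rw [hda]; exact h.1, by rw [hdb]; exact h.2⟩
  have hz : ∃ z, z ∈ Set.Ioo a b ∧ f z < f w + ε := by
    rcases eq_or_lt_of_le hwmem.1 with h1 | h1
    · have hcw : ContinuousWithinAt f (Set.Ioo a b) a :=
        (hf a ha).mono ((Set.Ioo_subset_Icc_self).trans hsub)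
      have hfa : f a < f w + ε := by rw [h1] at *; linarith
      have hev : ∀ᶠ zz in 𝓝[Set.Ioo a b] a, f zz < f w + ε :=
        hcw.eventually_lt_const hfa
      have hne : (𝓝[Set.Ioo a b] a).NeBot := left_nhdsWithin_Ioo_neBot hab
      obtain ⟨zz, h1', h2'⟩ := (hev.and eventually_mem_nhdsWithin).exists
      exact ⟨zz, h2', h1'⟩
    · rcases eq_or_lt_of_le hwmem.2 with h2 | h2
      · have hcw : ContinuousWithinAt f (Set.Ioo a b) b :=
          (hf b hb).mono ((Set.Ioo_subset_Icc_self).trans hsub)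
        have hfb : f b < f w + ε := by rw [← h2] at *; linarith
        have hev : ∀ᶠ zz in 𝓝[Set.Ioo a b] b, f zz < f w + ε :=
          hcw.eventually_lt_const hfb
        have hne : (𝓝[Set.Ioo a b] b).NeBot := right_nhdsWithin_Ioo_neBot hab
        obtain ⟨zz, h1', h2'⟩ := (hev.and eventually_mem_nhdsWithin).exists
        exact ⟨zz, h2', h1'⟩
      · exact ⟨w, ⟨h1, h2⟩, by linarith⟩
  obtain ⟨z, hzmem, hzlt⟩ := hz
  refine ⟨z, hzmem.1, hzmem.2, ?_⟩
  have hfz : f w ≤ f z := hwlb z (Set.Ioo_subset_Icc_self hzmem)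
  rcases hcase with h | h
  · exact Or.inl (le_trans (by linarith) (le_abs_self _))
  · exact Or.inr (le_trans (by linarith) (le_abs_self _))

end AuxPVar

/-- If the real tree `T(f)` of an excursion function `f` contains `N` pairwise disjoint
closed balls of radius `r` (given by centers `c i` whose closed `r`-balls for the tree
pseudometric are pairwise disjoint), then `V^p(f) ≥ (N - 1) r^p`. -/
theorem pVar_ge_of_disjoint_balls (f : ℝ → ℝ) (hf : ContinuousOn f (Set.Icc 0 1))
    (h0 : f 0 = 0) (h1 : f 1 = 0) (hpos : ∀ x ∈ Set.Icc (0 : ℝ) 1, 0 ≤ f x)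
    (p : ℝ) (hp : 1 ≤ p) (r : ℝ) (hr : 0 < r) (N : ℕ)
    (c : Fin N → ℝ) (hc : ∀ i, c i ∈ Set.Icc (0 : ℝ) 1)
    (hdisj : ∀ i j : Fin N, i ≠ j → ∀ z ∈ Set.Icc (0 : ℝ) 1,
      ¬(treeDist f (c i) z ≤ r ∧ treeDist f (c j) z ≤ r)) :
    ENNReal.ofReal (((N : ℝ) - 1) * r ^ p) ≤ pVar f p := by
  rcases Nat.lt_or_ge N 2 with hN | hN
  · have hle : ((N : ℝ) - 1) * r ^ p ≤ 0 := by
      apply mul_nonpos_of_nonpos_of_nonneg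
      · have : (N : ℝ) ≤ 1 := by exact_mod_cast Nat.lt_succ_iff.mp hN
        linarith
      · exact Real.rpow_nonneg hr.le p
    simp [ENNReal.ofReal_eq_zero.2 hle]
  -- N ≥ 2
  have hp0 : (0:ℝ) ≤ p := le_trans zero_le_one hp
  have hcinj : Function.Injective c := by
    intro i j hij
    by_contra hne
    exact hdisj i j hne (c i) (hc i)
      ⟨by rw [treeDist_self_aux]; exact hr.le, by rw [← hij, treeDist_self_aux]; exact hr.le⟩
  set M := N - 1 with hMdef
  have hMN : N = M + 1 := by omega
  have hM1 : 1 ≤ M := by omega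
  set s : Finset ℝ := Finset.image c Finset.univ with hs
  have hcard : s.card = N := by
    rw [hs, Finset.card_image_of_injective _ hcinj, Finset.card_univ, Fintype.card_fin]
  set e := s.orderIsoOfFin hcard with he
  set a : ℕ → ℝ := fun k => if h : k < N then (e ⟨k, h⟩ : ℝ) else 0 with ha
  have hamem : ∀ k, k < N → a k ∈ s := by
    intro k h
    rw [ha]; simp only [dif_pos h]; exact Finset.coe_mem _
  have haIcc : ∀ k, k < N → a k ∈ Set.Icc (0:ℝ) 1 := by
    intro k h
    obtain ⟨i, -, hi⟩ := Finset.mem_image.mp (hamem k h)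
    rw [← hi]; exact hc i
  have hainc : ∀ k, k + 1 < N → a k < a (k + 1) := by
    intro k h
    have h' : k < N := by omega
    rw [ha]; simp only [dif_pos h, dif_pos h']
    exact Subtype.coe_lt_coe.mpr (e.strictMono (Fin.mk_lt_mk.mpr (by omega)))
  have hsep : ∀ k, k + 1 < N → ∀ z ∈ Set.Icc (0:ℝ) 1,
      ¬(treeDist f (a k) z ≤ r ∧ treeDist f (a (k + 1)) z ≤ r) := by
    intro k h
    obtain ⟨i, -, hi⟩ := Finset.mem_image.mp (hamem k (by omega))
    obtain ⟨j, -, hj⟩ := Finset.mem_image.mp (hamem (k + 1) h)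
    have hij : i ≠ j := by
      intro hEq
      have : a k = a (k + 1) := by rw [← hi, hEq, hj]
      exact absurd this (ne_of_lt (hainc k h))
    rw [← hi, ← hj]
    exact hdisj i j hij
  have main : ∀ ε : ℝ, 0 < ε → ε < r →
      ENNReal.ofReal ((M : ℝ) * (r - ε) ^ p) ≤ pVar f p := by
    intro ε hε hεr
    have hrε : (0:ℝ) ≤ r - ε := by linarith
    have hexz : ∀ j : ℕ, j < M → ∃ z, a j < z ∧ z < a (j + 1) ∧
        (r - ε ≤ |f (a j) - f z| ∨ r - ε ≤ |f (a (j + 1)) - f z|) := by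
      intro j hj
      exact key_interval f hf (hainc j (by omega)) (haIcc j (by omega))
        (haIcc (j + 1) (by omega)) hε (hsep j (by omega))
    choose! z hz1 hz2 hz3 using hexz
    set g : ℕ → ℝ := fun n => if n % 2 = 0 then a (n / 2) else z (n / 2) with hg
    set x : Fin (2 * M + 1) → ℝ := fun i => g i.val with hx
    have hga : ∀ j : ℕ, g (2 * j) = a j := by
      intro j
      have e1 : (2 * j) % 2 = 0 := by omega
      have e2 : (2 * j) / 2 = j := by omega
      rw [hg]; simp only [e1, e2]; norm_num
    have hgz : ∀ j : ℕ, g (2 * j + 1) = z j := by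
      intro j
      have e1 : (2 * j + 1) % 2 = 1 := by omega
      have e2 : (2 * j + 1) / 2 = j := by omega
      rw [hg]; simp only [e1, e2]; norm_num
    have hgi : ∀ n, n < 2 * M → g n < g (n + 1) := by
      intro n hn
      rcases Nat.even_or_odd n with ⟨j, rfl⟩ | ⟨j, rfl⟩
      · have hj : j < M := by omega
        have : j + j = 2 * j := by omega
        rw [this, hga, hgz]
        exact hz1 j hj
      · have hj : j < M := by omega
        have : 2 * j + 1 + 1 = 2 * (j + 1) := by omega
        rw [this, hgz, hga]
        exact hz2 j hj
    have hpart : IsPartition (2 * M) x := by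
      constructor
      · rw [Fin.strictMono_iff_lt_succ]
        intro i
        exact hgi i.val i.isLt
      · intro i
        have hn : i.val ≤ 2 * M := by omega
        rcases Nat.even_or_odd i.val with hpar | hpar
        · obtain ⟨j, hj⟩ := hpar
          have e2 : i.val = 2 * j := by omega
          rw [hx]; simp only [e2, hga]
          exact haIcc j (by omega)
        · obtain ⟨j, hj⟩ := hpar
          have hjM : j < M := by omega
          rw [hx]; simp only [hj, hgz]
          have h1 := (haIcc j (by omega)).1
          have h2 := (haIcc (j + 1) (by omega)).2
          have h3 := hz1 j hjM
          have h4 := hz2 j hjM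
          constructor <;> linarith
    have hrεterm : ∀ j : ℕ, j < M → ∃ n, n < 2 * M ∧ n / 2 = j ∧
        (r - ε) ^ p ≤ |f (g n) - f (g (n + 1))| ^ p := by
      intro j hj
      rcases hz3 j hj with h | h
      · refine ⟨2 * j, by omega, by omega, ?_⟩
        have : 2 * j + 1 = 2 * j + 1 := rfl
        rw [hga, hgz]
        exact Real.rpow_le_rpow hrε h hp0
      · refine ⟨2 * j + 1, by omega, by omega, ?_⟩
        have e2 : 2 * j + 1 + 1 = 2 * (j + 1) := by omega
        rw [e2, hgz, hga, abs_sub_comm]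
        exact Real.rpow_le_rpow hrε h hp0
    choose! nn hn1 hn2 hn3 using hrεterm
    set ψ : Fin M → Fin (2 * M) := fun j => ⟨nn j.val, hn1 j.val j.isLt⟩ with hψ
    have hψinj : Function.Injective ψ := by
      intro j1 j2 h
      have hv : nn j1.val = nn j2.val := congrArg Fin.val h
      apply Fin.ext
      rw [← hn2 j1.val j1.isLt, hv, hn2 j2.val j2.isLt]
    set F : Fin (2 * M) → ℝ := fun i => |f (x i.castSucc) - f (x i.succ)| ^ p with hF
    have hterm : ∀ j : Fin M, (r - ε) ^ p ≤ F (ψ j) := by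
      intro j
      have h1 : x (ψ j).castSucc = g (nn j.val) := rfl
      have h2 : x (ψ j).succ = g (nn j.val + 1) := rfl
      rw [hF]; simp only [h1, h2]
      exact hn3 j.val j.isLt
    have hsum : (M : ℝ) * (r - ε) ^ p ≤ varSum f p (2 * M) x := by
      have h1 : ∑ _j : Fin M, (r - ε) ^ p ≤ ∑ j : Fin M, F (ψ j) :=
        Finset.sum_le_sum (fun j _ => hterm j)
      have h2 : ∑ j : Fin M, F (ψ j) = ∑ i ∈ Finset.univ.image ψ, F i :=
        (Finset.sum_image (fun j _ j' _ h => hψinj h)).symm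
      have h3 : ∑ i ∈ Finset.univ.image ψ, F i ≤ ∑ i : Fin (2 * M), F i :=
        Finset.sum_le_sum_of_subset_of_nonneg (Finset.subset_univ _)
          (fun i _ _ => Real.rpow_nonneg (abs_nonneg _) p)
      have h4 : ∑ _j : Fin M, (r - ε) ^ p = (M : ℝ) * (r - ε) ^ p := by
        rw [Finset.sum_const, Finset.card_univ, Fintype.card_fin, nsmul_eq_mul]
      have h5 : varSum f p (2 * M) x = ∑ i : Fin (2 * M), F i := rfl
      rw [h5]; rw [h4] at h1; rw [h2] at h1; linarith
    calc ENNReal.ofReal ((M : ℝ) * (r - ε) ^ p)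
        ≤ ENNReal.ofReal (varSum f p (2 * M) x) := ENNReal.ofReal_le_ofReal hsum
      _ ≤ pVar f p := le_iSup_of_le (2 * M) (le_iSup_of_le x (le_iSup_of_le hpart le_rfl))
  have hlim : Filter.Tendsto (fun ε : ℝ => ENNReal.ofReal ((M : ℝ) * (r - ε) ^ p))
      (𝓝[>] (0:ℝ)) (𝓝 (ENNReal.ofReal ((M : ℝ) * r ^ p))) := by
    apply Filter.Tendsto.mono_left ?_ nhdsWithin_le_nhds
    have h1 : Filter.Tendsto (fun ε : ℝ => r - ε) (𝓝 (0:ℝ)) (𝓝 r) := by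
      simpa using (tendsto_const_nhds (x := r)).sub (Filter.tendsto_id (x := 𝓝 (0:ℝ)))
    have h2 : ContinuousAt (fun t : ℝ => t ^ p) r :=
      Real.continuousAt_rpow_const r p (Or.inl hr.ne')
    have h3 := (h2.tendsto.comp h1).const_mul (M : ℝ)
    exact (ENNReal.continuous_ofReal.tendsto _).comp h3
  have hfin : ENNReal.ofReal ((M : ℝ) * r ^ p) ≤ pVar f p :=
    le_of_tendsto hlim (Filter.eventually_of_mem
      (Ioo_mem_nhdsGT_of_mem ⟨le_refl (0:ℝ), hr⟩) (fun ε hε => main ε hε.1 hε.2))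
  have hMcast : ((N : ℝ) - 1) = (M : ℝ) := by rw [hMN]; push_cast; ring
  rwa [hMcast]


end
end

section
/- Let f : S^1 → ℝ be continuous. Then the upper variation index equals the variation index: Ī(f) = I(f). -/
open Set Filter Metric Topology
open scoped ENNReal NNReal

noncomputable section

/-! Since `V_r^p(f) ≤ V^p(f)`, the work is to show that `V^p(f) = ∞` forces `V̄^q(f) = ∞` for
every `q < p`. Following `f` from a point and stopping each time it has moved by exactly `r`
(intermediate value theorem) turns a partition with `N` increments of size at least `2r` into a
partition with at least `N` increments all equal to `r`, so `N(2r) r^q ≤ V_r^q(f)`. If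
`V_r^q(f) ≤ C` for all small `r`, there are thus `O(2^{kq})` increments of size about `2^{-k}`,
and summing over dyadic levels bounds every `p`-variation sum by a geometric series in
`2^{-k(p-q)}`. -/

section StepChain

open Finset (range range_add_one filter_insert card_insert_le)
open scoped Finset

variable {f : ℝ → ℝ} {r q a b : ℝ}

def IsStepChain (f : ℝ → ℝ) (r : ℝ) (K : ℕ) (y : ℕ → ℝ) : Prop :=
  ∀ k < K, y k < y (k + 1) ∧ |f (y k) - f (y (k + 1))| = r

lemma exists_mem_Ioc_abs_sub_eq (hf : ContinuousOn f (Icc a b)) (hr : 0 < r) (hab : a ≤ b)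
    (h : r ≤ |f b - f a|) :
    ∃ z ∈ Ioc a b, |f a - f z| = r ∧ |f b - f z| = |f b - f a| - r := by
  wlog hfab : f a ≤ f b generalizing f
  · have hneg := this (f := -f) hf.neg (by simpa only [Pi.neg_apply, neg_sub_neg, abs_sub_comm]
      using h) (by simp only [Pi.neg_apply]; linarith)
    simpa only [Pi.neg_apply, neg_sub_neg, abs_sub_comm] using hneg
  rw [abs_of_nonneg (sub_nonneg.2 hfab)] at h ⊢
  obtain ⟨z, hz, hfz⟩ : f a + r ∈ f '' Icc a b :=
    intermediate_value_Icc hab hf ⟨by linarith, by linarith⟩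
  refine ⟨z, ⟨hz.1.lt_of_ne ?_, hz.2⟩, ?_, ?_⟩
  · rintro rfl
    linarith
  · rw [hfz, sub_add_cancel_left, abs_neg, abs_of_pos hr]
  · rw [hfz, abs_of_nonneg (by linarith)]
    ring

lemma IsStepChain.update {K : ℕ} {y : ℕ → ℝ} {z : ℝ} (hy : IsStepChain f r K y) (hz : y K < z)
    (hfz : |f (y K) - f z| = r) : IsStepChain f r (K + 1) (Function.update y (K + 1) z) := by
  intro k hk
  rcases Nat.lt_succ_iff_lt_or_eq.1 hk with hk | rfl
  · rw [Function.update_of_ne (by omega), Function.update_of_ne (by omega)]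
    exact hy k hk
  · rw [Function.update_self, Function.update_of_ne (by omega)]
    exact ⟨hz, hfz⟩

lemma IsStepChain.exists_extend {K : ℕ} {y : ℕ → ℝ} {t : ℝ} (hf : ContinuousOn f (Icc a b))
    (hr : 0 < r) (hy : IsStepChain f r K y) (hyK : y K ∈ Icc a t) (htb : t ≤ b) :
    ∃ K' y', IsStepChain f r K' y' ∧ y' 0 = y 0 ∧ y' K' ∈ Icc a t ∧ |f t - f (y' K')| < r ∧
      K ≤ K' ∧ (r ≤ |f t - f (y K)| → K < K') := by
  obtain ⟨N, hN⟩ := exists_nat_gt (|f t - f (y K)| / r)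
  rw [div_lt_iff₀ hr] at hN
  induction N generalizing K y with
  | zero => exact absurd hN (by simp)
  | succ N ih =>
    rcases lt_or_ge |f t - f (y K)| r with hlt | hlt
    · exact ⟨K, y, hy, rfl, hyK, hlt, le_rfl, fun h => absurd h (not_le.2 hlt)⟩
    obtain ⟨z, hz, hyz, hzt⟩ :=
      exists_mem_Ioc_abs_sub_eq (hf.mono (Icc_subset_Icc hyK.1 htb)) hr hyK.2 hlt
    have hupd := hy.update hz.1 hyz
    obtain ⟨K', y', hy', hy'0, hy'K, hy'r, hKK', -⟩ := ih hupd
      (by rw [Function.update_self]; exact ⟨hyK.1.trans hz.1.le, hz.2⟩)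
      (by rw [Function.update_self, hzt]; push_cast at hN; linarith)
    refine ⟨K', y', hy', ?_, hy'K, hy'r, by omega, fun _ => by omega⟩
    rw [hy'0, Function.update_of_ne (by omega)]

lemma exists_stepChain_card_le (hf : ContinuousOn f (Icc a b)) (hr : 0 < r) {x : ℕ → ℝ}
    (hx : Monotone x) (ha : a ≤ x 0) {n : ℕ} (hb : x n ≤ b) :
    ∃ K y, IsStepChain f r K y ∧ y 0 = x 0 ∧ y K ≤ x n ∧
      #{i ∈ range n | 2 * r ≤ |f (x i) - f (x (i + 1))|} ≤ K := by
  suffices ∃ K y, IsStepChain f r K y ∧ y 0 = x 0 ∧ y K ∈ Icc a (x n) ∧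
      |f (x n) - f (y K)| < r ∧ #{i ∈ range n | 2 * r ≤ |f (x i) - f (x (i + 1))|} ≤ K by
    obtain ⟨K, y, hy, hy0, hyK, -, hcard⟩ := this
    exact ⟨K, y, hy, hy0, hyK.2, hcard⟩
  induction n with
  | zero =>
    exact ⟨0, fun _ => x 0, fun k hk => absurd hk (Nat.not_lt_zero k), rfl, ⟨ha, le_rfl⟩,
      by simpa using hr, by simp⟩
  | succ n ih =>
    obtain ⟨K, y, hy, hy0, hyK, hyr, hcard⟩ := ih ((hx n.le_succ).trans hb)
    obtain ⟨K', y', hy', hy'0, hy'K, hy'r, hKK', hbig⟩ :=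
      hy.exists_extend hf hr ⟨hyK.1, hyK.2.trans (hx n.le_succ)⟩ hb
    refine ⟨K', y', hy', hy'0.trans hy0, hy'K, hy'r, ?_⟩
    rw [range_add_one, filter_insert]
    split_ifs with h
    · -- a jump of at least `2r` leaves the `r`-neighbourhood of the last chain value
      have hfar : r ≤ |f (x (n + 1)) - f (y K)| := by
        have := abs_sub_le (f (x n)) (f (y K)) (f (x (n + 1)))
        rw [abs_sub_comm (f (y K))] at this
        linarith
      have := hbig hfar
      exact (card_insert_le _ _).trans (by omega)
    · omega

lemma IsStepChain.ofReal_mul_rpow_le_prVar {K : ℕ} {y : ℕ → ℝ} (hy : IsStepChain f r K y)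
    (h0 : 0 ≤ y 0) (h1 : y K ≤ 1) : ENNReal.ofReal (K * r ^ q) ≤ prVar f q r := by
  set z : Fin (K + 1) → ℝ := fun i => y i
  have hz : StrictMono z := Fin.strictMono_iff_lt_succ.2 fun i => (hy i i.isLt).1
  have hsteps : ∀ i : Fin K, |f (z i.castSucc) - f (z i.succ)| = r := fun i => (hy i i.isLt).2
  have hpart : IsPartition K z :=
    ⟨hz, fun i => ⟨h0.trans (hz.monotone (Fin.zero_le i)), (hz.monotone (Fin.le_last i)).trans h1⟩⟩
  have hsum : varSum f q K z = K * r ^ q := by simp [varSum, hsteps]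
  rw [← hsum]
  exact le_iSup_of_le K (le_iSup_of_le z (le_iSup_of_le hpart (le_iSup_of_le hsteps le_rfl)))

lemma ofReal_card_mul_rpow_le_prVar (hf : ContinuousOn f (Icc 0 1)) (hr : 0 < r) (q : ℝ)
    {n : ℕ} {x : Fin (n + 1) → ℝ} (hx : IsPartition n x) :
    ENNReal.ofReal (#{i : Fin n | 2 * r ≤ |f (x i.castSucc) - f (x i.succ)|} * r ^ q) ≤
      prVar f q r := by
  set x' : ℕ → ℝ := fun j => x ⟨min j n, by omega⟩
  have hx' : Monotone x' := fun j k hjk => hx.1.monotone (Fin.mk_le_mk.2 (min_le_min_right n hjk))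
  have hcast : ∀ i : Fin n, x' i = x i.castSucc ∧ x' (i + 1) = x i.succ := fun i =>
    ⟨congrArg x (Fin.ext (min_eq_left i.isLt.le)), congrArg x (Fin.ext (min_eq_left i.isLt))⟩
  obtain ⟨K, y, hy, hy0, hyK, hcard⟩ :=
    exists_stepChain_card_le hf hr hx' (hx.2 0).1 (n := n) (hx.2 _).2
  have hcount : #{i : Fin n | 2 * r ≤ |f (x i.castSucc) - f (x i.succ)|} =
      #{i ∈ range n | 2 * r ≤ |f (x' i) - f (x' (i + 1))|} := by
    rw [Finset.card_filter, Finset.card_filter, ← Fin.sum_univ_eq_sum_range]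
    simp only [hcast]
  calc ENNReal.ofReal (#{i : Fin n | 2 * r ≤ |f (x i.castSucc) - f (x i.succ)|} * r ^ q)
      ≤ ENNReal.ofReal (K * r ^ q) := by
        rw [hcount]
        gcongr
    _ ≤ prVar f q r := hy.ofReal_mul_rpow_le_prVar (hy0 ▸ (hx.2 0).1) (hyK.trans (hx.2 _).2)

end StepChain

section DyadicSum

open Finset (range sum_le_sum mul_sum sum_comm)
open scoped Finset

lemma exists_div_two_pow_le_le {σ A t : ℝ} (hσ : 0 < σ) (ht : 0 < t) (htA : t ≤ A) :
    ∃ j : ℕ, σ / 2 ^ j ≤ t ∧ t ≤ max 2 (A / σ) * (σ / 2 ^ j) := by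
  have hex : ∃ j : ℕ, σ / 2 ^ j ≤ t := by
    obtain ⟨j, hj⟩ := pow_unbounded_of_one_lt (σ / t) one_lt_two
    rw [div_lt_iff₀ ht] at hj
    exact ⟨j, (div_le_iff₀ (by positivity)).2 (by linarith)⟩
  refine ⟨Nat.find hex, Nat.find_spec hex, ?_⟩
  rcases h : Nat.find hex with _ | j
  · calc t ≤ A / σ * (σ / 2 ^ 0) := by rwa [pow_zero, div_one, div_mul_cancel₀ _ hσ.ne']
      _ ≤ _ := by gcongr; exact le_max_right _ _
  · have hlt : t < σ / 2 ^ j := not_le.1 (Nat.find_min hex (by omega))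
    calc t ≤ 2 * (σ / 2 ^ (j + 1)) := hlt.le.trans_eq (by rw [pow_succ]; ring)
      _ ≤ _ := by gcongr; exact le_max_left _ _

lemma eventually_rpow_le_mul_sum {σ A t p : ℝ} (hσ : 0 < σ) (hp : 0 < p) (ht : t ∈ Icc 0 A) :
    ∀ᶠ K in atTop, t ^ p ≤ max 2 (A / σ) ^ p *
      ∑ k ∈ range K, if σ / 2 ^ k ≤ t then (σ / 2 ^ k) ^ p else 0 := by
  have hterm : ∀ k, 0 ≤ if σ / 2 ^ k ≤ t then (σ / 2 ^ k) ^ p else 0 := fun k => by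
    split_ifs <;> positivity
  rcases ht.1.eq_or_lt with rfl | htpos
  · refine Eventually.of_forall fun K => ?_
    rw [Real.zero_rpow hp.ne']
    exact mul_nonneg (by positivity) (Finset.sum_nonneg fun k _ => hterm k)
  obtain ⟨j, hjt, htj⟩ := exists_div_two_pow_le_le hσ htpos ht.2
  filter_upwards [eventually_gt_atTop j] with K hK
  calc t ^ p ≤ (max 2 (A / σ) * (σ / 2 ^ j)) ^ p := Real.rpow_le_rpow ht.1 htj hp.le
    _ = max 2 (A / σ) ^ p * (if σ / 2 ^ j ≤ t then (σ / 2 ^ j) ^ p else 0) := by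
      rw [if_pos hjt, Real.mul_rpow (by positivity) (by positivity)]
    _ ≤ _ := by
      gcongr
      exact Finset.single_le_sum (fun k _ => hterm k) (Finset.mem_range.2 hK)

lemma div_two_pow_rpow_eq {σ s : ℝ} (hσ : 0 ≤ σ) (k : ℕ) :
    (σ / 2 ^ k) ^ s = σ ^ s * ((2 : ℝ) ^ (-s)) ^ k := by
  rw [Real.div_rpow hσ (by positivity), ← Real.rpow_natCast_mul zero_le_two,
    ← Real.rpow_mul_natCast zero_le_two, div_eq_mul_inv, ← Real.rpow_neg zero_le_two, neg_mul,
    mul_comm s]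

theorem sum_rpow_le_of_card_mul_rpow_le {ι : Type*} [Fintype ι] {a : ι → ℝ} {A C σ p q : ℝ}
    (hσ : 0 < σ) (hp : 0 < p) (hqp : q < p) (ha : ∀ i, a i ∈ Icc 0 A)
    (hcard : ∀ t ∈ Ioc 0 σ, #{i | t ≤ a i} * t ^ q ≤ C) :
    ∑ i, a i ^ p ≤ max 2 (A / σ) ^ p * C * σ ^ (p - q) / (1 - 2 ^ (q - p)) := by
  set M := max 2 (A / σ)
  set w : ℝ := 2 ^ (q - p)
  have hw : w < 1 := Real.rpow_lt_one_of_one_lt_of_neg one_lt_two (by linarith)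
  have hC : 0 ≤ C := (by positivity : 0 ≤ (#{i | σ ≤ a i} : ℝ) * σ ^ q).trans
    (hcard σ ⟨hσ, le_rfl⟩)
  have hlevel (k : ℕ) : #{i | σ / 2 ^ k ≤ a i} * (σ / 2 ^ k) ^ p ≤ C * σ ^ (p - q) * w ^ k := by
    have hsk : 0 < σ / 2 ^ k := by positivity
    calc (#{i | σ / 2 ^ k ≤ a i} : ℝ) * (σ / 2 ^ k) ^ p
        = #{i | σ / 2 ^ k ≤ a i} * (σ / 2 ^ k) ^ q * (σ / 2 ^ k) ^ (p - q) := by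
          rw [mul_assoc, ← Real.rpow_add hsk, add_sub_cancel]
      _ ≤ C * (σ / 2 ^ k) ^ (p - q) := by
          gcongr
          exact hcard _ ⟨hsk, div_le_self hσ.le (one_le_pow₀ one_le_two)⟩
      _ = C * σ ^ (p - q) * w ^ k := by
          rw [div_two_pow_rpow_eq hσ.le, neg_sub, mul_assoc]
  obtain ⟨K, hK⟩ := (eventually_all.2 fun i => eventually_rpow_le_mul_sum hσ hp (ha i)).exists
  calc ∑ i, a i ^ p
      ≤ ∑ i, M ^ p * ∑ k ∈ range K, if σ / 2 ^ k ≤ a i then (σ / 2 ^ k) ^ p else 0 :=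
        sum_le_sum fun i _ => hK i
    _ = M ^ p * ∑ k ∈ range K, #{i | σ / 2 ^ k ≤ a i} * (σ / 2 ^ k) ^ p := by
        rw [← mul_sum, sum_comm]
        simp [Finset.sum_ite]
    _ ≤ M ^ p * ∑ k ∈ range K, C * σ ^ (p - q) * w ^ k := by
        gcongr M ^ p * ?_
        exact sum_le_sum fun k _ => hlevel k
    _ ≤ M ^ p * (C * σ ^ (p - q) * (1 / (1 - w))) := by
        rw [← mul_sum]
        gcongr
        simpa using geom_sum_Ico_le_of_lt_one (m := 0) (n := K) (by positivity) hw
    _ = M ^ p * C * σ ^ (p - q) / (1 - w) := by ring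

end DyadicSum

section VariationIndex

open scoped Finset

variable {f : ℝ → ℝ} {p q : ℝ}

theorem pVar_ne_top_of_prVar_le (hf : ContinuousOn f (Icc 0 1)) (hp : 0 < p) (hqp : q < p)
    {ε : ℝ} (hε : 0 < ε) {C : ℝ≥0∞} (hC : C ≠ ⊤) (hbound : ∀ r ∈ Ioo 0 ε, prVar f q r ≤ C) :
    pVar f p ≠ ⊤ := by
  obtain ⟨A, hA⟩ := Metric.isBounded_iff.1 (isCompact_Icc.image_of_continuousOn hf).isBounded
  refine ne_top_of_le_ne_top (ENNReal.ofReal_ne_top (r := max 2 (A / (ε / 2)) ^ p *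
    (2 ^ q * C.toReal) * (ε / 2) ^ (p - q) / (1 - 2 ^ (q - p))))
    (iSup₂_le fun n x => iSup_le fun hx => ENNReal.ofReal_le_ofReal ?_)
  refine sum_rpow_le_of_card_mul_rpow_le (half_pos hε) hp hqp
    (fun i => ⟨abs_nonneg _, (Real.dist_eq _ _).symm.trans_le
      (hA (mem_image_of_mem f (hx.2 _)) (mem_image_of_mem f (hx.2 _)))⟩) fun t ht => ?_
  have hr : t / 2 ∈ Ioo 0 ε := ⟨half_pos ht.1, by linarith [ht.2]⟩
  have hcount := (ofReal_card_mul_rpow_le_prVar hf hr.1 q hx).trans (hbound _ hr)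
  rw [ENNReal.ofReal_le_iff_le_toReal hC, mul_div_cancel₀ _ two_ne_zero,
    Real.div_rpow ht.1.le zero_le_two] at hcount
  rwa [mul_div_assoc', div_le_iff₀ (by positivity), mul_comm _ (2 ^ q)] at hcount

lemma prVar_le_pVar (f : ℝ → ℝ) (p r : ℝ) : prVar f p r ≤ pVar f p :=
  iSup_mono fun _ => iSup_mono fun _ => iSup_mono fun _ => iSup_le fun _ => le_rfl

lemma uVarContent_le_pVar (f : ℝ → ℝ) (p : ℝ) : uVarContent f p ≤ pVar f p :=
  limsup_le_of_le (by isBoundedDefault) (Eventually.of_forall fun r => prVar_le_pVar f p r)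

lemma pVar_eq_top_of_uVarContent_eq_top (h : uVarContent f p = ⊤) : pVar f p = ⊤ :=
  top_unique (h ▸ uVarContent_le_pVar f p)

theorem uVarContent_eq_top_of_pVar_eq_top (hf : ContinuousOn f (Icc 0 1)) (hp : 0 < p)
    (hqp : q < p) (h : pVar f p = ⊤) : uVarContent f q = ⊤ := by
  by_contra hq
  obtain ⟨ε, hε, hsub⟩ := mem_nhdsGT_iff_exists_Ioo_subset.1
    (eventually_lt_of_limsup_lt (ENNReal.lt_add_right hq one_ne_zero))
  exact pVar_ne_top_of_prVar_le hf hp hqp hε (ENNReal.add_ne_top.2 ⟨hq, ENNReal.one_ne_top⟩)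
    (fun r hr => (hsub hr).le) h

/-- `varIndex f` and `upperVarIndex f` are, by definition, `supIndex (pVar f · = ⊤)` and
`supIndex (uVarContent f · = ⊤)`. -/
def supIndex (P : ℝ → Prop) : ℝ≥0∞ :=
  1 ⊔ ⨆ (p : ℝ) (_ : 1 ≤ p) (_ : P p), ENNReal.ofReal p

lemma supIndex_le_supIndex {P Q : ℝ → Prop} (h : ∀ p, 1 < p → P p → ∀ q ∈ Ico 1 p, Q q) :
    supIndex P ≤ supIndex Q := by
  refine sup_le le_sup_left (iSup₂_le fun p hp => iSup_le fun hP => ?_)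
  rcases hp.eq_or_lt with rfl | hp
  · rw [ENNReal.ofReal_one]
    exact le_sup_left
  refine le_of_tendsto ((ENNReal.continuous_ofReal.tendsto p).mono_left
    (nhdsWithin_le_nhds (s := Iio p))) ?_
  filter_upwards [Ioo_mem_nhdsLT hp] with q hq
  exact le_sup_of_le_right
    (le_iSup₂_of_le q hq.1.le (le_iSup_of_le (h p hp hP q ⟨hq.1.le, hq.2⟩) le_rfl))

end VariationIndex

theorem upperVarIndex_eq_varIndex_general (f : ℝ → ℝ) (hf : Continuous f) :
    upperVarIndex f = varIndex f := by
  have hcontent (p q : ℝ) (hq : 1 ≤ q) (hqp : q < p) (hp : pVar f p = ⊤) : uVarContent f q = ⊤ :=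
    uVarContent_eq_top_of_pVar_eq_top hf.continuousOn (by linarith) hqp hp
  apply le_antisymm
  · exact supIndex_le_supIndex fun p _ hp q hq => pVar_eq_top_of_uVarContent_eq_top
      (hcontent p q hq.1 hq.2 (pVar_eq_top_of_uVarContent_eq_top hp))
  · exact supIndex_le_supIndex fun p _ hp q hq => hcontent p q hq.1 hq.2 hp

/-- The upper variation index coincides with the variation index: `Ī(f) = I(f)`. -/
theorem upperVarIndex_eq_varIndex (f : ℝ → ℝ) (hf : Continuous f)
    (hper : ∀ x, f (x + 1) = f x) :
    upperVarIndex f = varIndex f :=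
  upperVarIndex_eq_varIndex_general f hf

end
end
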